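/- arXiv:2604.02949 — 6 statements merged into one kernel-verified Lean document; each statement's English description precedes it below -/
import Mathlib

section
/- Let T be a rooted tree and let Z be a set of nodes of T. Let LCA(T,Z) denote the set of all lowest common ancestors lca(x,y) for x,y in Z (including x=y). Then every connected component C of T - LCA(T,Z) has at most 2 neighbors in T, i.e. |N_T(V(C))| ≤ 2. -/
/-- `y` is an ancestor of `x` in the tree `G` rooted at `root`:
`y` lies on every (the unique) root-`x` path. -/
def Ancestor {V : Type*} (G : SimpleGraph V) (root y x : V) : Prop :=
  ∀ p : G.Walk root x, p.IsPath → y ∈ p.support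

/-- `z` is the lowest common ancestor of `x` and `y`. -/
def IsLCA {V : Type*} (G : SimpleGraph V) (root x y z : V) : Prop :=
  Ancestor G root z x ∧ Ancestor G root z y ∧
    ∀ w, Ancestor G root w x → Ancestor G root w y → Ancestor G root w z

/-- The lowest common ancestor closure of `Z`. -/
def LCAclosure {V : Type*} (lca : V → V → V) (Z : Set V) : Set V :=
  {z | ∃ x ∈ Z, ∃ y ∈ Z, z = lca x y}

/-- `C` is a connected component of `G - L`. -/
def IsComponentAvoiding {V : Type*} (G : SimpleGraph V) (L C : Set V) : Prop :=
  ∃ v, v ∉ L ∧ C = {w | ∃ p : G.Walk v w, ∀ x ∈ p.support, x ∉ L}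

open SimpleGraph Walk

namespace TreeLCA

variable {V : Type*} [DecidableEq V] {G : SimpleGraph V}

noncomputable def tpath (hG : G.IsTree) (u v : V) : G.Walk u v :=
  (hG.existsUnique_path u v).exists.choose

lemma tpath_isPath (hG : G.IsTree) (u v : V) : (tpath hG u v).IsPath :=
  (hG.existsUnique_path u v).exists.choose_spec

lemma tpath_unique (hG : G.IsTree) {u v : V} {p : G.Walk u v} (hp : p.IsPath) :
    p = tpath hG u v :=
  (hG.existsUnique_path u v).unique hp (tpath_isPath hG u v)

lemma ancestor_iff (hG : G.IsTree) {root y x : V} :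
    Ancestor G root y x ↔ y ∈ (tpath hG root x).support := by
  constructor
  · exact fun h => h _ (tpath_isPath hG root x)
  · intro h p hp; rwa [tpath_unique hG hp]

lemma support_take_drop {u v y : V} (p : G.Walk u v) (hy : y ∈ p.support) :
    p.support = (p.takeUntil y hy).support ++ ((p.dropUntil y hy).support).tail := by
  conv_lhs => rw [← p.take_spec hy]
  exact support_append _ _

lemma disjoint_take_drop {u v y z : V} {p : G.Walk u v} (hp : p.IsPath) (hy : y ∈ p.support)
    (h1 : z ∈ (p.takeUntil y hy).support) (h2 : z ∈ ((p.dropUntil y hy).support).tail) :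
    False := by
  have hn := (isPath_def p).mp hp
  rw [support_take_drop p hy, List.nodup_append] at hn
  exact hn.2.2 _ h1 _ h2 rfl

lemma mem_take_or_drop {u v y z : V} (p : G.Walk u v) (hy : y ∈ p.support)
    (hz : z ∈ p.support) :
    z ∈ (p.takeUntil y hy).support ∨ z ∈ ((p.dropUntil y hy).support) := by
  conv at hz => rw [← p.take_spec hy]
  exact (mem_support_append_iff _ _).mp hz

set_option linter.unusedSectionVars false

lemma tpath_take (hG : G.IsTree) {root x y : V} (hy : y ∈ (tpath hG root x).support) :
    tpath hG root y = (tpath hG root x).takeUntil y hy :=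
  (tpath_unique hG ((tpath_isPath hG root x).takeUntil hy)).symm

lemma isPath_append_take {u y z : V} {x : V} {p : G.Walk u x} (hp : p.IsPath)
    (hy : y ∈ p.support) (hz : z ∈ (p.dropUntil y hy).support) :
    ((p.takeUntil y hy).append ((p.dropUntil y hy).takeUntil z hz)).IsPath := by
  rw [isPath_def, support_append, List.nodup_append]
  refine ⟨(isPath_def _).mp (hp.takeUntil hy), ?_, ?_⟩
  · exact (((isPath_def _).mp ((hp.dropUntil hy).takeUntil hz)).sublist (List.tail_sublist _))
  · intro a ha1 b ha2 hab
    subst hab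
    have ha3 : a ∈ ((p.dropUntil y hy).takeUntil z hz).support := List.mem_of_mem_tail ha2
    have hne : a ≠ y := by
      have hnd := (isPath_def _).mp ((hp.dropUntil hy).takeUntil hz)
      rw [support_eq_cons] at hnd
      intro h; subst h
      exact (List.nodup_cons.mp hnd).1 ha2
    have ha4 : a ∈ ((p.dropUntil y hy).support).tail := by
      have := support_takeUntil_subset _ hz ha3
      rw [support_eq_cons (p.dropUntil y hy), List.mem_cons] at this
      rcases this with h | h
      · exact absurd h hne
      · exact h
    exact disjoint_take_drop hp hy ha1 ha4

lemma anc_of_mem_drop (hG : G.IsTree) {root x y z : V}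
    (hy : y ∈ (tpath hG root x).support)
    (hz : z ∈ ((tpath hG root x).dropUntil y hy).support) : Ancestor G root y z := by
  intro q hq
  have hq2 := isPath_append_take (tpath_isPath hG root x) hy hz
  have := (hG.existsUnique_path root z).unique hq hq2
  rw [this, mem_support_append_iff]
  exact Or.inl (end_mem_support _)

lemma anc_refl {root x : V} : Ancestor G root x x := fun p _ => p.end_mem_support

lemma anc_trans (hG : G.IsTree) {root a b c : V} (h1 : Ancestor G root a b)
    (h2 : Ancestor G root b c) : Ancestor G root a c := by
  rw [ancestor_iff hG] at h1 h2 ⊢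
  rw [tpath_take hG h2] at h1
  exact support_takeUntil_subset _ h2 h1

lemma anc_antisymm (hG : G.IsTree) {root y z : V} (h1 : Ancestor G root y z)
    (h2 : Ancestor G root z y) : y = z := by
  rw [ancestor_iff hG] at h1 h2
  rw [tpath_take hG h1] at h2
  have hz2 : z ∈ ((tpath hG root z).dropUntil y h1).support := end_mem_support _
  rw [support_eq_cons, List.mem_cons] at hz2
  rcases hz2 with h | h
  · exact h.symm
  · exact absurd (disjoint_take_drop (tpath_isPath hG root z) h1 h2 h) not_false

lemma anc_total (hG : G.IsTree) {root x y z : V} (h1 : Ancestor G root y x)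
    (h2 : Ancestor G root z x) : Ancestor G root y z ∨ Ancestor G root z y := by
  rw [ancestor_iff hG] at h1 h2
  rcases mem_take_or_drop (tpath hG root x) h1 h2 with h | h
  · right; rw [ancestor_iff hG, tpath_take hG h1]; exact h
  · left; exact anc_of_mem_drop hG h1 h

lemma isLCA_unique (hG : G.IsTree) {root x y m m' : V} (h : IsLCA G root x y m)
    (h' : IsLCA G root x y m') : m = m' :=
  anc_antisymm hG (h'.2.2 m h.1 h.2.1) (h.2.2 m' h'.1 h'.2.1)

section LCAfun
variable (hG : G.IsTree) {root : V} {lca : V → V → V}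
  (hlca : ∀ x y, IsLCA G root x y (lca x y))

include hG hlca

lemma lca_comm (x y : V) : lca x y = lca y x :=
  isLCA_unique hG (hlca x y) ⟨(hlca y x).2.1, (hlca y x).1,
    fun w h1 h2 => (hlca y x).2.2 w h2 h1⟩

lemma lca_left (x y z : V) :
    lca (lca x y) z = lca x z ∨ lca (lca x y) z = lca y z := by
  rcases anc_total hG (hlca x z).2.1 (hlca y z).2.1 with h | h
  · left
    refine isLCA_unique hG (hlca _ z) ⟨(hlca x y).2.2 _ (hlca x z).1
      (anc_trans hG h (hlca y z).1), (hlca x z).2.1, fun w h1 h2 => ?_⟩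
    exact (hlca x z).2.2 w (anc_trans hG h1 (hlca x y).1) h2
  · right
    refine isLCA_unique hG (hlca _ z) ⟨(hlca x y).2.2 _
      (anc_trans hG h (hlca x z).1) (hlca y z).1, (hlca y z).2.1, fun w h1 h2 => ?_⟩
    exact (hlca y z).2.2 w (anc_trans hG h1 (hlca x y).2.1) h2

lemma lca_right (x y z : V) :
    lca x (lca y z) = lca x y ∨ lca x (lca y z) = lca x z := by
  rw [lca_comm hG hlca, lca_comm hG hlca x y, lca_comm hG hlca x z]
  exact lca_left hG hlca y z x

lemma lca_mem_closure {Z : Set V} {a b : V} (ha : a ∈ LCAclosure lca Z)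
    (hb : b ∈ LCAclosure lca Z) : lca a b ∈ LCAclosure lca Z := by
  obtain ⟨x1, hx1, y1, hy1, rfl⟩ := ha
  obtain ⟨x2, hx2, y2, hy2, rfl⟩ := hb
  rcases lca_left hG hlca x1 y1 (lca x2 y2) with h | h <;> rw [h] <;>
    [rcases lca_right hG hlca x1 x2 y2 with h2 | h2;
     rcases lca_right hG hlca y1 x2 y2 with h2 | h2] <;> rw [h2]
  · exact ⟨x1, hx1, x2, hx2, rfl⟩
  · exact ⟨x1, hx1, y2, hy2, rfl⟩
  · exact ⟨y1, hy1, x2, hx2, rfl⟩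
  · exact ⟨y1, hy1, y2, hy2, rfl⟩

end LCAfun

lemma mem_tpath_of_between (hG : G.IsTree) {root a b c : V}
    (hab : Ancestor G root a b) (hbc : Ancestor G root b c) :
    b ∈ (tpath hG a c).support := by
  have hac : Ancestor G root a c := anc_trans hG hab hbc
  have ha : a ∈ (tpath hG root c).support := (ancestor_iff hG).mp hac
  have hq : tpath hG a c = (tpath hG root c).dropUntil a ha :=
    (tpath_unique hG ((tpath_isPath hG root c).dropUntil ha)).symm
  rw [hq]
  have hb : b ∈ (tpath hG root c).support := (ancestor_iff hG).mp hbc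
  rcases mem_take_or_drop (tpath hG root c) ha hb with h | h
  · have : Ancestor G root b a := by
      rw [ancestor_iff hG, tpath_take hG ha]; exact h
    have : b = a := anc_antisymm hG this hab
    rw [this]; exact start_mem_support _
  · exact h

lemma lca_mem_tpath (hG : G.IsTree) {root x y m : V} (h : IsLCA G root x y m) :
    m ∈ (tpath hG x y).support := by
  have hx : m ∈ (tpath hG root x).support := (ancestor_iff hG).mp h.1
  have hy : m ∈ (tpath hG root y).support := (ancestor_iff hG).mp h.2.1
  set t : G.Walk x y :=
    ((tpath hG root x).dropUntil m hx).reverse.append ((tpath hG root y).dropUntil m hy)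
    with ht
  have htp : t.IsPath := by
    rw [isPath_def, support_append, support_reverse, List.nodup_append]
    refine ⟨List.nodup_reverse.mpr ((isPath_def _).mp
      ((tpath_isPath hG root x).dropUntil hx)), ((isPath_def _).mp
      ((tpath_isPath hG root y).dropUntil hy)).sublist (List.tail_sublist _), ?_⟩
    intro a ha1 b ha2 hab
    subst hab
    rw [List.mem_reverse] at ha1
    have hax : Ancestor G root a x := (ancestor_iff hG).mpr
      (support_dropUntil_subset _ hx ha1)
    have hay : Ancestor G root a y := (ancestor_iff hG).mpr
      (support_dropUntil_subset _ hy (List.mem_of_mem_tail ha2))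
    have ham : Ancestor G root a m := h.2.2 a hax hay
    have : a ∈ ((tpath hG root y).takeUntil m hy).support := by
      rw [ancestor_iff hG, tpath_take hG hy] at ham; exact ham
    exact disjoint_take_drop (tpath_isPath hG root y) hy this ha2
  rw [← tpath_unique hG htp, ht, mem_support_append_iff]
  left
  rw [support_reverse, List.mem_reverse]
  exact start_mem_support _

end TreeLCA

open TreeLCA

theorem stmt0 {V : Type*} [Fintype V] (G : SimpleGraph V) (hG : G.IsTree) (root : V)
    (lca : V → V → V) (hlca : ∀ x y, IsLCA G root x y (lca x y))
    (Z : Set V) (C : Set V)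
    (hC : IsComponentAvoiding G (LCAclosure lca Z) C) :
    {w | w ∉ C ∧ ∃ v ∈ C, G.Adj v w}.ncard ≤ 2 := by
  classical
  obtain ⟨v, hvL, hCdef⟩ := hC
  set L := LCAclosure lca Z with hL
  have hCL : ∀ w ∈ C, w ∉ L := by
    intro w hw
    rw [hCdef] at hw
    obtain ⟨p, hp⟩ := hw
    exact hp w p.end_mem_support
  have hmemC : ∀ w, (∃ p : G.Walk v w, ∀ x ∈ p.support, x ∉ L) → w ∈ C := by
    intro w h; rw [hCdef]; exact h
  have hNL : ∀ w, w ∉ C → ∀ u, u ∈ C → G.Adj u w → w ∈ L := by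
    intro w hw u hu hadj
    by_contra hwL
    have hu' := hu
    rw [hCdef] at hu'
    obtain ⟨p, hp⟩ := hu'
    refine hw (hmemC w ⟨p.concat hadj, ?_⟩)
    intro x hx
    rw [SimpleGraph.Walk.support_concat, List.mem_append] at hx
    rcases hx with h | h
    · exact hp x h
    · rw [List.mem_singleton] at h; subst h; exact hwL
  have hpathC : ∀ a c : V, a ∉ C → c ∉ C → a ≠ c →
      (∃ u ∈ C, G.Adj u a) → (∃ u ∈ C, G.Adj u c) →
      ∀ x ∈ (tpath hG a c).support, x = a ∨ x = c ∨ x ∈ C := by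
    rintro a c haC hcC hac ⟨va, hva, hadja⟩ ⟨vc, hvc, hadjc⟩
    have hva' := hva; rw [hCdef] at hva'; obtain ⟨pa, hpa⟩ := hva'
    have hvc' := hvc; rw [hCdef] at hvc'; obtain ⟨pc, hpc⟩ := hvc'
    set q := (pa.reverse.append pc).bypass with hq
    have hqC : ∀ x ∈ q.support, x ∈ C := by
      intro x hx
      have hx2 := (pa.reverse.append pc).support_bypass_subset hx
      rw [SimpleGraph.Walk.mem_support_append_iff, SimpleGraph.Walk.support_reverse,
        List.mem_reverse] at hx2
      rcases hx2 with h | h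
      · exact hmemC x ⟨pa.takeUntil x h,
          fun y hy => hpa y (SimpleGraph.Walk.support_takeUntil_subset _ _ hy)⟩
      · exact hmemC x ⟨pc.takeUntil x h,
          fun y hy => hpc y (SimpleGraph.Walk.support_takeUntil_subset _ _ hy)⟩
    set t : G.Walk a c := SimpleGraph.Walk.cons hadja.symm (q.concat hadjc) with htdef
    have htp : t.IsPath := by
      rw [SimpleGraph.Walk.isPath_def, htdef, SimpleGraph.Walk.support_cons,
        SimpleGraph.Walk.support_concat, List.nodup_cons,
        List.nodup_append]
      refine ⟨?_, (SimpleGraph.Walk.isPath_def _).mp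
        (SimpleGraph.Walk.bypass_isPath _), List.nodup_singleton c, ?_⟩
      · intro h
        rw [List.mem_append, List.mem_singleton] at h
        rcases h with h | h
        · exact haC (hqC a h)
        · exact hac h
      · intro x hx1 y hx2 hxy
        rw [List.mem_singleton] at hx2; subst hxy; subst hx2
        exact hcC (hqC x hx1)
    have ht := tpath_unique hG htp
    rw [← ht]
    intro x hx
    rw [htdef, SimpleGraph.Walk.support_cons, List.mem_cons,
      SimpleGraph.Walk.support_concat, List.mem_append,
      List.mem_singleton] at hx
    rcases hx with h | h | h
    · exact Or.inl h
    · exact Or.inr (Or.inr (hqC x h))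
    · exact Or.inr (Or.inl h)
  by_contra hcard
  rw [not_le] at hcard
  obtain ⟨a, haN, b, hbN, c, hcN, hab, hac, hbc⟩ :=
    (Set.two_lt_ncard (Set.toFinite _)).mp hcard
  have hcmp : ∀ w1, (w1 ∉ C ∧ ∃ u ∈ C, G.Adj u w1) → ∀ w2,
      (w2 ∉ C ∧ ∃ u ∈ C, G.Adj u w2) → w1 ≠ w2 →
      Ancestor G root w1 w2 ∨ Ancestor G root w2 w1 := by
    rintro w1 ⟨h1C, u1, hu1, hadj1⟩ w2 ⟨h2C, u2, hu2, hadj2⟩ hne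
    have hw1L : w1 ∈ L := hNL w1 h1C u1 hu1 hadj1
    have hw2L : w2 ∈ L := hNL w2 h2C u2 hu2 hadj2
    have hm : lca w1 w2 ∈ L := lca_mem_closure hG hlca hw1L hw2L
    have hms := lca_mem_tpath hG (hlca w1 w2)
    rcases hpathC w1 w2 h1C h2C hne ⟨u1, hu1, hadj1⟩ ⟨u2, hu2, hadj2⟩ _ hms with h | h | h
    · exact Or.inl (h ▸ (hlca w1 w2).2.1)
    · exact Or.inr (h ▸ (hlca w1 w2).1)
    · exact absurd hm (hCL _ h)
  have hchain : ∀ x, (x ∉ C ∧ ∃ u ∈ C, G.Adj u x) → ∀ y, (y ∉ C ∧ ∃ u ∈ C, G.Adj u y) →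
      ∀ z, (z ∉ C ∧ ∃ u ∈ C, G.Adj u z) → x ≠ z → y ≠ x → y ≠ z →
      Ancestor G root x y → Ancestor G root y z → False := by
    intro x hx y hy z hz hxz hyx hyz hxy hyz'
    have hmem := mem_tpath_of_between hG hxy hyz'
    rcases hpathC x z hx.1 hz.1 hxz hx.2 hz.2 y hmem with h | h | h
    · exact hyx h
    · exact hyz h
    · exact hy.1 h
  rcases hcmp a haN b hbN hab with h1 | h1 <;>
    rcases hcmp a haN c hcN hac with h2 | h2 <;>
    rcases hcmp b hbN c hcN hbc with h3 | h3
  · exact hchain a haN b hbN c hcN hac hab.symm hbc h1 h3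
  · exact hchain a haN c hcN b hbN hab hac.symm hbc.symm h2 h3
  · exact hchain c hcN a haN b hbN hbc.symm hac hab h2 h1
  · exact hchain c hcN a haN b hbN hbc.symm hac hab h2 h1
  · exact hchain b hbN a haN c hcN hbc hab hac h1 h2
  · exact hchain b hbN a haN c hcN hbc hab hac h1 h2
  · exact hchain b hbN c hcN a haN hab.symm hbc.symm hac.symm h3 h2
  · exact hchain c hcN b hbN a haN hac.symm hbc hab.symm h3 h1
end

section
/- Let T be a rooted tree, Z a set of nodes of T, and C a component of T - LCA(T,Z) with exactly two neighbors y₁, y₂ in LCA(T,Z). Then y₁ and y₂ are comparable in T (one is an ancestor of the other). -/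
section helpers
variable {V : Type*} [DecidableEq V] {G : SimpleGraph V} {root : V}

lemma exists_root_path (hG : G.IsTree) (root x : V) : ∃ p : G.Walk root x, p.IsPath := by
  obtain ⟨w⟩ := hG.isConnected root x
  exact ⟨w.bypass, w.bypass_isPath⟩

lemma anc_of_mem (hG : G.IsTree) {x y : V} (p : G.Walk root x) (hp : p.IsPath)
    (hy : y ∈ p.support) : Ancestor G root y x := by
  intro q hq
  have : (⟨q, hq⟩ : G.Path root x) = ⟨p, hp⟩ := hG.IsAcyclic.path_unique _ _
  rw [show q = p from congrArg Subtype.val this]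
  exact hy

lemma anc_trans {a b x : V} (hab : Ancestor G root a b) (hbx : Ancestor G root b x) :
    Ancestor G root a x := by
  intro p hp
  have hb := hbx p hp
  have := hab (p.takeUntil b hb) (hp.takeUntil hb)
  exact p.support_takeUntil_subset hb this

lemma anc_antisymm (hG : G.IsTree) {a b : V} (hab : Ancestor G root a b)
    (hba : Ancestor G root b a) : a = b := by
  obtain ⟨p, hp⟩ := exists_root_path hG root b
  have ha := hab p hp
  have hb' := hba (p.takeUntil a ha) (hp.takeUntil ha)
  have hnodup : p.support.Nodup := hp.support_nodup
  rw [← p.take_spec ha, SimpleGraph.Walk.support_append] at hnodup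
  have hdis := List.disjoint_of_nodup_append hnodup
  have hbdrop : b ∈ (p.dropUntil a ha).support := (p.dropUntil a ha).end_mem_support
  rw [SimpleGraph.Walk.support_eq_cons (p.dropUntil a ha)] at hbdrop
  rcases List.mem_cons.mp hbdrop with h | h
  · exact h.symm
  · exact absurd h (hdis hb')

lemma anc_of_between (hG : G.IsTree) {a b x : V} (p : G.Walk root x) (hp : p.IsPath)
    (hb : b ∈ p.support) (ha : a ∈ (p.dropUntil b hb).support) :
    Ancestor G root b a := by
  have hW : ((p.takeUntil b hb).append ((p.dropUntil b hb).takeUntil a ha)).IsPath := by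
    apply SimpleGraph.Walk.IsPath.of_append_left (q := (p.dropUntil b hb).dropUntil a ha)
    rw [← SimpleGraph.Walk.append_assoc, (p.dropUntil b hb).take_spec ha, p.take_spec hb]
    exact hp
  apply anc_of_mem hG _ hW
  rw [SimpleGraph.Walk.mem_support_append_iff]
  exact Or.inl (p.takeUntil b hb).end_mem_support

lemma anc_total (hG : G.IsTree) {a b x : V} (hax : Ancestor G root a x)
    (hbx : Ancestor G root b x) : Ancestor G root a b ∨ Ancestor G root b a := by
  obtain ⟨p, hp⟩ := exists_root_path hG root x
  have ha := hax p hp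
  have hb := hbx p hp
  rw [← p.take_spec hb, SimpleGraph.Walk.mem_support_append_iff] at ha
  rcases ha with h | h
  · exact Or.inl (anc_of_mem hG _ (hp.takeUntil hb) h)
  · exact Or.inr (anc_of_between hG p hp hb h)

end helpers

open SimpleGraph in
theorem stmt3 {V : Type*} [Fintype V] (G : SimpleGraph V) (hG : G.IsTree) (root : V)
    (lca : V → V → V) (hlca : ∀ x y, IsLCA G root x y (lca x y))
    (Z : Set V) (C : Set V)
    (hC : IsComponentAvoiding G (LCAclosure lca Z) C)
    (y₁ y₂ : V) (hne : y₁ ≠ y₂)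
    (hN : {w | w ∉ C ∧ ∃ v ∈ C, G.Adj v w} = {y₁, y₂}) :
    Ancestor G root y₁ y₂ ∨ Ancestor G root y₂ y₁ := by
  classical
  by_contra hcon
  push_neg at hcon
  obtain ⟨h12, h21⟩ := hcon
  set L := LCAclosure lca Z with hL
  obtain ⟨v₀, hv₀, hCeq⟩ := hC
  have hmemC : ∀ x, x ∈ C ↔ ∃ p : G.Walk v₀ x, ∀ a ∈ p.support, a ∉ L := by
    intro x; rw [hCeq]; rfl
  have hCnotL : ∀ x ∈ C, x ∉ L := by
    intro x hx
    obtain ⟨p, hp⟩ := (hmemC x).mp hx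
    exact hp x p.end_mem_support
  -- supports of avoiding walks are in C
  have hsupC : ∀ x (p : G.Walk v₀ x), (∀ a ∈ p.support, a ∉ L) → ∀ u ∈ p.support, u ∈ C := by
    intro x p hp u hu
    refine (hmemC u).mpr ⟨p.takeUntil u hu, fun a ha => hp a (p.support_takeUntil_subset hu ha)⟩
  -- y₁, y₂ are neighbors of C
  have hy₁ : y₁ ∉ C ∧ ∃ v ∈ C, G.Adj v y₁ := by
    have : y₁ ∈ ({y₁, y₂} : Set V) := Or.inl rfl
    rw [← hN] at this; exact this
  have hy₂ : y₂ ∉ C ∧ ∃ v ∈ C, G.Adj v y₂ := by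
    have : y₂ ∈ ({y₁, y₂} : Set V) := Or.inr rfl
    rw [← hN] at this; exact this
  obtain ⟨v₁, hv₁C, hadj₁⟩ := hy₁.2
  obtain ⟨v₂, hv₂C, hadj₂⟩ := hy₂.2
  -- neighbors are in L
  have hyL : ∀ y, y ∉ C → ∀ v ∈ C, G.Adj v y → y ∈ L := by
    intro y hyC v hvC hadj
    by_contra hyl
    obtain ⟨p, hp⟩ := (hmemC v).mp hvC
    refine hyC ((hmemC y).mpr ⟨p.concat hadj, ?_⟩)
    intro a ha
    rw [Walk.support_concat, List.mem_append] at ha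
    rcases ha with ha | ha
    · exact hp a ha
    · rw [List.mem_singleton] at ha; exact ha ▸ hyl
  have hy₁L : y₁ ∈ L := hyL y₁ hy₁.1 v₁ hv₁C hadj₁
  have hy₂L : y₂ ∈ L := hyL y₂ hy₂.1 v₂ hv₂C hadj₂
  obtain ⟨a, haZ, b, hbZ, hab⟩ := hy₁L
  obtain ⟨c, hcZ, d, hdZ, hcd⟩ := hy₂L
  -- z = lca y₁ y₂
  set z := lca y₁ y₂ with hzdef
  have hz := hlca y₁ y₂
  have hy₁a : Ancestor G root y₁ a := hab ▸ (hlca a b).1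
  have hy₂c : Ancestor G root y₂ c := hcd ▸ (hlca c d).1
  -- z ∈ L via m = lca a c
  have hzL : z ∈ L := by
    set m := lca a c with hmdef
    have hm := hlca a c
    have hcmp₁ : Ancestor G root m y₁ := by
      rcases anc_total hG hm.1 hy₁a with h | h
      · exact h
      · exact absurd (anc_total hG (anc_trans h hm.2.1) hy₂c) (by simp [h12, h21])
    have hcmp₂ : Ancestor G root m y₂ := by
      rcases anc_total hG hm.2.1 hy₂c with h | h
      · exact h
      · exact absurd (anc_total hG hy₁a (anc_trans h hm.1)) (by simp [h12, h21])
    have hmz : Ancestor G root m z := hz.2.2 m hcmp₁ hcmp₂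
    have hzm : Ancestor G root z m :=
      hm.2.2 z (anc_trans hz.1 hy₁a) (anc_trans hz.2.1 hy₂c)
    have : z = m := anc_antisymm hG hzm hmz
    exact ⟨a, haZ, c, hcZ, this⟩
  have hzne₁ : z ≠ y₁ := fun h => h12 (h ▸ hz.2.1)
  have hzne₂ : z ≠ y₂ := fun h => h21 (h ▸ hz.1)
  -- walk from y₁ to y₂ through C
  obtain ⟨p₁, hp₁⟩ := (hmemC v₁).mp hv₁C
  obtain ⟨p₂, hp₂⟩ := (hmemC v₂).mp hv₂C
  set W : G.Walk y₁ y₂ := Walk.cons hadj₁.symm ((p₁.reverse.append p₂).concat hadj₂) with hWdef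
  have hWsup : ∀ u ∈ W.support, u = y₁ ∨ u = y₂ ∨ u ∈ C := by
    intro u hu
    rw [hWdef, Walk.support_cons, List.mem_cons, Walk.support_concat,
      List.mem_append, List.mem_singleton,
      Walk.mem_support_append_iff, Walk.support_reverse, List.mem_reverse] at hu
    rcases hu with h | (h | h) | h
    · exact Or.inl h
    · exact Or.inr (Or.inr (hsupC v₁ p₁ hp₁ u h))
    · exact Or.inr (Or.inr (hsupC v₂ p₂ hp₂ u h))
    · exact Or.inr (Or.inl h)
  -- path from y₁ to y₂ through z
  obtain ⟨r₁, hr₁⟩ := exists_root_path hG root y₁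
  obtain ⟨r₂, hr₂⟩ := exists_root_path hG root y₂
  have hz₁ : z ∈ r₁.support := hz.1 r₁ hr₁
  have hz₂ : z ∈ r₂.support := hz.2.1 r₂ hr₂
  set s₁ := r₁.dropUntil z hz₁ with hs₁
  set s₂ := r₂.dropUntil z hz₂ with hs₂
  have hkey : ∀ u, u ∈ s₁.support → u ∈ s₂.support → u = z := by
    intro u hu₁ hu₂
    have huy₁ : Ancestor G root u y₁ :=
      anc_of_mem hG r₁ hr₁ (r₁.support_dropUntil_subset hz₁ hu₁)
    have huy₂ : Ancestor G root u y₂ :=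
      anc_of_mem hG r₂ hr₂ (r₂.support_dropUntil_subset hz₂ hu₂)
    exact anc_antisymm hG (hz.2.2 u huy₁ huy₂) (anc_of_between hG r₁ hr₁ hz₁ hu₁)
  set Q : G.Walk y₁ y₂ := s₁.reverse.append s₂ with hQdef
  have hzQ : z ∈ Q.support := by
    rw [hQdef, Walk.mem_support_append_iff]
    exact Or.inl s₁.reverse.end_mem_support
  have hs₂nodup : s₂.support.Nodup := (hr₂.dropUntil hz₂).support_nodup
  have hznotail : z ∉ s₂.support.tail := by
    intro h
    have := hs₂nodup
    rw [Walk.support_eq_cons s₂] at this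
    exact this.notMem h
  have hQpath : Q.IsPath := by
    rw [hQdef, Walk.isPath_def, Walk.support_append, Walk.support_reverse]
    refine List.Nodup.append (List.nodup_reverse.mpr (hr₁.dropUntil hz₁).support_nodup) hs₂nodup.tail ?_
    intro u hu₁ hu₂
    rw [List.mem_reverse] at hu₁
    exact hznotail ((hkey u hu₁ (List.mem_of_mem_tail hu₂)) ▸ hu₂)
  -- uniqueness of paths
  have hPQ : (⟨W.bypass, W.bypass_isPath⟩ : G.Path y₁ y₂) = ⟨Q, hQpath⟩ :=
    hG.IsAcyclic.path_unique _ _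
  have hzP : z ∈ W.bypass.support := by
    rw [show W.bypass = Q from congrArg Subtype.val hPQ]
    exact hzQ
  have hzW : z ∈ W.support := W.support_bypass_subset hzP
  rcases hWsup z hzW with h | h | h
  · exact hzne₁ h
  · exact hzne₂ h
  · exact hCnotL z h hzL
end

section
/- Let G be a graph, let (C,D) be a partition of V(G), let c₀ ∈ C and d₀ ∈ D be in the same connected component, and let (V₁,…,V_k) be a D-twin partition of C, i.e. a partition of C such that any two vertices in the same part V_i have the same neighborhood inside D. Then dist_G(c₀,d₀) = min over i ∈ [k] of (dist_G(c₀,V_i) + dist_{G[V_i ∪ D]}(V_i, d₀)). -/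
/-- Extended shortest-path distance in a graph (`⊤` if unreachable). -/
noncomputable def eDist {V : Type*} (G : SimpleGraph V) (u v : V) : ℕ∞ :=
  sInf {n : ℕ∞ | ∃ p : G.Walk u v, n = (p.length : ℕ∞)}

/-- Extended shortest-path distance using only walks with support inside `X`
(this is the distance in the induced subgraph `G[X]`). -/
noncomputable def eDistWithin {V : Type*} (G : SimpleGraph V) (X : Set V) (u v : V) : ℕ∞ :=
  sInf {n : ℕ∞ | ∃ p : G.Walk u v, (∀ x ∈ p.support, x ∈ X) ∧ n = (p.length : ℕ∞)}

private lemma eDist_le_length {V : Type*} {G : SimpleGraph V} {u v : V} (p : G.Walk u v) :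
    eDist G u v ≤ (p.length : ℕ∞) := sInf_le ⟨p, rfl⟩

private lemma eDistWithin_le_length {V : Type*} {G : SimpleGraph V} {X : Set V} {u v : V}
    (p : G.Walk u v) (hp : ∀ x ∈ p.support, x ∈ X) :
    eDistWithin G X u v ≤ (p.length : ℕ∞) := sInf_le ⟨p, hp, rfl⟩

private lemma enat_iInf_add {ι : Sort*} (f : ι → ℕ∞) (c : ℕ∞) :
    (⨅ i, f i) + c = ⨅ i, (f i + c) := by
  cases isEmpty_or_nonempty ι
  · simp [iInf_of_isEmpty]
  · refine le_antisymm (le_iInf fun i => add_le_add (iInf_le f i) le_rfl) ?_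
    obtain ⟨i₀, hi₀⟩ : sInf (Set.range f) ∈ Set.range f := csInf_mem (Set.range_nonempty f)
    have h : (⨅ i, f i) = f i₀ := hi₀.symm
    rw [h]
    exact iInf_le _ i₀

private lemma enat_add_iInf {ι : Sort*} (f : ι → ℕ∞) (c : ℕ∞) :
    c + (⨅ i, f i) = ⨅ i, (c + f i) := by
  rw [add_comm, enat_iInf_add]
  simp [add_comm]

private lemma walk_split {V : Type*} {G : SimpleGraph V} (S : Set V) :
    ∀ {u w : V} (p : G.Walk u w), w ∉ S →
      (∀ x ∈ p.support, x ∉ S) ∨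
      ∃ y, y ∈ S ∧ ∃ q : G.Walk u y, ∃ r : G.Walk y w,
        q.length + r.length = p.length ∧ (∀ x ∈ r.support.tail, x ∉ S) ∧
        ∀ x ∈ r.support.tail, x ∈ p.support := by
  intro u w p hw
  induction p with
  | nil =>
    left; intro x hx
    simp only [SimpleGraph.Walk.support_nil, List.mem_singleton] at hx
    subst hx; exact hw
  | @cons a b c h p ih =>
    rcases ih hw with h1 | ⟨y, hy, q, r, hlen, htail, hsub⟩
    · by_cases ha : a ∈ S
      · right
        refine ⟨a, ha, SimpleGraph.Walk.nil, SimpleGraph.Walk.cons h p, by simp, ?_, ?_⟩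
        · intro x hx
          rw [SimpleGraph.Walk.support_cons] at hx
          exact h1 x hx
        · intro x hx
          rw [SimpleGraph.Walk.support_cons] at hx ⊢
          exact List.mem_cons_of_mem _ hx
      · left
        intro x hx
        rw [SimpleGraph.Walk.support_cons] at hx
        rcases List.mem_cons.1 hx with rfl | hx
        · exact ha
        · exact h1 x hx
    · right
      refine ⟨y, hy, SimpleGraph.Walk.cons h q, r, ?_, htail, ?_⟩
      · simp only [SimpleGraph.Walk.length_cons]; omega
      · intro x hx
        rw [SimpleGraph.Walk.support_cons]
        exact List.mem_cons_of_mem _ (hsub x hx)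

private lemma key_le {V : Type*} {G : SimpleGraph V} {D : Set V}
    {Wi : Set V} (hWD : Disjoint Wi D)
    (htwin : ∀ u ∈ Wi, ∀ v ∈ Wi, ∀ d ∈ D, (G.Adj u d ↔ G.Adj v d))
    {c₀ d₀ v w : V} (hv : v ∈ Wi) (hw : w ∈ Wi) (hd₀ : d₀ ∈ D)
    (q : G.Walk c₀ v) (p : G.Walk w d₀) (hp : ∀ x ∈ p.support, x ∈ Wi ∪ D) :
    eDist G c₀ d₀ ≤ (q.length : ℕ∞) + (p.length : ℕ∞) := by
  have hd₀W : d₀ ∉ Wi := Set.disjoint_right.1 hWD hd₀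
  rcases walk_split Wi p hd₀W with h1 | ⟨y, hy, q', r, hlen, htail, hsub⟩
  · exact absurd hw (h1 w p.start_mem_support)
  · cases r with
    | nil => exact absurd hy hd₀W
    | @cons _ b _ hadj r'' =>
      have hbtail : b ∈ (SimpleGraph.Walk.cons hadj r'').support.tail := by
        rw [SimpleGraph.Walk.support_cons]
        exact r''.start_mem_support
      have hbD : b ∈ D := by
        rcases hp b (hsub b hbtail) with hb | hb
        · exact absurd hb (htail b hbtail)
        · exact hb
      have hadj' : G.Adj v b := (htwin y hy v hv b hbD).1 hadj
      have hlen' : q'.length + (r''.length + 1) = p.length := by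
        simpa [SimpleGraph.Walk.length_cons] using hlen
      calc eDist G c₀ d₀ ≤ ((q.append (SimpleGraph.Walk.cons hadj' r'')).length : ℕ∞) :=
            eDist_le_length _
        _ = ((q.length + (r''.length + 1) : ℕ) : ℕ∞) := by
            simp [SimpleGraph.Walk.length_append, SimpleGraph.Walk.length_cons]
        _ ≤ ((q.length + p.length : ℕ) : ℕ∞) := by
            exact_mod_cast Nat.add_le_add_left (by omega) q.length
        _ = (q.length : ℕ∞) + (p.length : ℕ∞) := by push_cast; rfl

private lemma le_eDist_add_eDistWithin {V : Type*} {G : SimpleGraph V} {S : Set V}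
    {c₀ v w d₀ : V} {X : ℕ∞}
    (h : ∀ (q : G.Walk c₀ v) (p : G.Walk w d₀), (∀ x ∈ p.support, x ∈ S) →
      X ≤ (q.length : ℕ∞) + (p.length : ℕ∞)) :
    X ≤ eDist G c₀ v + eDistWithin G S w d₀ := by
  rw [eDist, sInf_eq_iInf', enat_iInf_add]
  refine le_iInf fun ⟨n, hn⟩ => ?_
  obtain ⟨q, rfl⟩ := hn
  rw [eDistWithin, sInf_eq_iInf', enat_add_iInf]
  refine le_iInf fun ⟨m, hm⟩ => ?_
  obtain ⟨p, hsupp, rfl⟩ := hm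
  exact h q p hsupp

theorem stmt5 {V : Type*} [Fintype V] (G : SimpleGraph V)
    (C D : Set V) (hcover : C ∪ D = Set.univ) (hdisj : Disjoint C D)
    (k : ℕ) (W : Fin k → Set V)
    (hWsub : ∀ i, W i ⊆ C)
    (hWdisj : ∀ i j, i ≠ j → Disjoint (W i) (W j))
    (hWcover : C ⊆ ⋃ i, W i)
    (htwin : ∀ i, ∀ u ∈ W i, ∀ v ∈ W i, ∀ d ∈ D, (G.Adj u d ↔ G.Adj v d))
    (c₀ d₀ : V) (hc₀ : c₀ ∈ C) (hd₀ : d₀ ∈ D) (hreach : G.Reachable c₀ d₀) :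
    eDist G c₀ d₀ =
      ⨅ i : Fin k, ((⨅ v ∈ W i, eDist G c₀ v) +
        ⨅ v ∈ W i, eDistWithin G (W i ∪ D) v d₀) := by
  have hCD : ∀ x, x ∉ C → x ∈ D := by
    intro x hx
    have hx' : x ∈ C ∪ D := hcover ▸ Set.mem_univ x
    rcases hx' with h | h
    · exact absurd h hx
    · exact h
  apply le_antisymm
  · refine le_iInf fun i => ?_
    rw [enat_iInf_add]
    refine le_iInf fun v => ?_
    rw [enat_iInf_add]
    refine le_iInf fun hv => ?_
    rw [enat_add_iInf]
    refine le_iInf fun w => ?_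
    rw [enat_add_iInf]
    refine le_iInf fun hw => ?_
    refine le_eDist_add_eDistWithin fun q p hsupp => ?_
    exact key_le (Set.disjoint_of_subset_left (hWsub i) hdisj) (htwin i) hv hw hd₀ q p hsupp
  · rw [eDist]
    refine le_sInf ?_
    rintro n ⟨P, rfl⟩
    have hd₀C : d₀ ∉ C := Set.disjoint_right.1 hdisj hd₀
    rcases walk_split C P hd₀C with h1 | ⟨y, hy, q, r, hlen, htail, _⟩
    · exact absurd hc₀ (h1 c₀ P.start_mem_support)
    · obtain ⟨i, hyi⟩ := Set.mem_iUnion.1 (hWcover hy)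
      refine le_trans (iInf_le _ i) ?_
      have hA : (⨅ v ∈ W i, eDist G c₀ v) ≤ (q.length : ℕ∞) :=
        le_trans (iInf₂_le y hyi) (eDist_le_length q)
      have hB : (⨅ v ∈ W i, eDistWithin G (W i ∪ D) v d₀) ≤ (r.length : ℕ∞) := by
        refine le_trans (iInf₂_le y hyi) (eDistWithin_le_length r ?_)
        intro x hx
        rw [SimpleGraph.Walk.support_eq_cons] at hx
        rcases List.mem_cons.1 hx with rfl | hx
        · exact Or.inl hyi
        · exact Or.inr (hCD x (htail x hx))
      calc (⨅ v ∈ W i, eDist G c₀ v) + ⨅ v ∈ W i, eDistWithin G (W i ∪ D) v d₀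
          ≤ (q.length : ℕ∞) + (r.length : ℕ∞) := add_le_add hA hB
        _ = (P.length : ℕ∞) := by rw [← Nat.cast_add, hlen]
end

section
/- Let G be a connected graph, let (X⁺,X⁻) be disjoint vertex sets, let c be a vertex and r an integer with X⁺ ⊆ B_G(c,r) and X⁻ ∩ B_G(c,r) = ∅. Let (A₁,A₂) be a separation of G with c ∈ A₁ and X⁺ ∪ X⁻ ⊆ A₂, and let S = A₁ ∩ A₂. For v ∈ S define r⁺(v) = max{dist_G(v,x) : x ∈ (X⁺∪X⁻) ∩ B_G(v, r - dist_G(c,v))} and r⁻(v) = min{dist_G(v,x) : x ∈ X⁻}. Suppose c' ∈ A₁ and s is an integer such that A₂ ∩ ⋃_{v∈S} B_G(v, r⁺(v)) ⊆ A₂ ∩ B_G(c',s) ⊆ A₂ ∩ ⋃_{v∈S} B_G(v, r⁻(v)-1). Then X⁺ ⊆ B_G(c',s) and X⁻ ∩ B_G(c',s) = ∅. -/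
/-!
A shortest path from `c` to a vertex `x ∈ X⁺ ⊆ A₂` must cross the separator `S = A₁ ∩ A₂` at some
vertex `v`, and then `dist(v, x) ≤ r - dist(c, v)`, so `x` lies in `B(v, r⁺(v))` and hence in
`B(c', s)`. Conversely a vertex `x ∈ X⁻` cannot lie in any `B(v, r⁻(v) - 1)`, since
`r⁻(v) ≤ dist(v, x)`, so it is not in `B(c', s)`.
-/

namespace SimpleGraph

variable {V : Type*} {G : SimpleGraph V} {A₁ A₂ : Set V}

theorem Walk.exists_mem_support_inter_of_separation (hcover : A₁ ∪ A₂ = Set.univ)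
    (hsep : ∀ a b, a ∈ A₁ \ A₂ → b ∈ A₂ \ A₁ → ¬ G.Adj a b) :
    ∀ {a b : V} (p : G.Walk a b), a ∈ A₁ → b ∈ A₂ → ∃ v ∈ p.support, v ∈ A₁ ∩ A₂
  | _, _, .nil, ha, hb => ⟨_, Walk.start_mem_support _, ha, hb⟩
  | a, _, .cons (v := a') hadj q, ha, hb => by
    by_cases ha₂ : a ∈ A₂
    · exact ⟨a, Walk.start_mem_support _, ha, ha₂⟩
    have ha'₁ : a' ∈ A₁ := by
      by_contra ha'₁
      have ha'₂ : a' ∈ A₂ := ((hcover ▸ Set.mem_univ a') : a' ∈ A₁ ∪ A₂).resolve_left ha'₁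
      exact hsep a a' ⟨ha, ha₂⟩ ⟨ha'₂, ha'₁⟩ hadj
    obtain ⟨v, hv, hvS⟩ := exists_mem_support_inter_of_separation hcover hsep q ha'₁ hb
    exact ⟨v, by simp [hv], hvS⟩

theorem Reachable.exists_dist_add_dist_le_of_separation [DecidableEq V]
    (hcover : A₁ ∪ A₂ = Set.univ) (hsep : ∀ a b, a ∈ A₁ \ A₂ → b ∈ A₂ \ A₁ → ¬ G.Adj a b)
    {a b : V} (hab : G.Reachable a b) (ha : a ∈ A₁) (hb : b ∈ A₂) :
    ∃ v ∈ A₁ ∩ A₂, G.dist a v + G.dist v b ≤ G.dist a b := by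
  obtain ⟨p, hp⟩ := hab.exists_walk_length_eq_dist
  obtain ⟨v, hv, hvS⟩ := p.exists_mem_support_inter_of_separation hcover hsep ha hb
  refine ⟨v, hvS, ?_⟩
  calc G.dist a v + G.dist v b
      ≤ (p.takeUntil v hv).length + (p.dropUntil v hv).length :=
        add_le_add (dist_le _) (dist_le _)
    _ = G.dist a b := by rw [← Walk.length_append, Walk.take_spec, hp]

end SimpleGraph

theorem stmt9_general {V : Type*} (G : SimpleGraph V) (hG : G.Connected)
    (Xp Xm : Set V)
    (c : V) (r : ℤ)
    (hp : ∀ x ∈ Xp, (G.dist c x : ℤ) ≤ r)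
    (A₁ A₂ : Set V) (hcover : A₁ ∪ A₂ = Set.univ)
    (hsep : ∀ a b, a ∈ A₁ \ A₂ → b ∈ A₂ \ A₁ → ¬ G.Adj a b)
    (hc : c ∈ A₁) (hX : Xp ∪ Xm ⊆ A₂)
    (c' : V) (s : ℤ)
    -- `A₂ ∩ ⋃_{v ∈ S} B(v, r⁺(v)) ⊆ A₂ ∩ B(c', s)` where
    -- `B(v, r⁺(v)) = {u | ∃ x ∈ X ∩ B(v, r - dist(c,v)), dist(v,u) ≤ dist(v,x)}`
    (hlow : A₂ ∩ {u | ∃ v ∈ A₁ ∩ A₂, ∃ x ∈ Xp ∪ Xm,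
        (G.dist v x : ℤ) ≤ r - G.dist c v ∧ G.dist v u ≤ G.dist v x}
        ⊆ A₂ ∩ {u | (G.dist c' u : ℤ) ≤ s})
    -- `A₂ ∩ B(c', s) ⊆ A₂ ∩ ⋃_{v ∈ S} B(v, r⁻(v) - 1)` where
    -- `B(v, r⁻(v) - 1) = {u | ∀ x ∈ X⁻, dist(v,u) < dist(v,x)}`
    (hup : A₂ ∩ {u | (G.dist c' u : ℤ) ≤ s}
        ⊆ A₂ ∩ {u | ∃ v ∈ A₁ ∩ A₂, ∀ x ∈ Xm, G.dist v u < G.dist v x}) :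
    Xp ⊆ {u | (G.dist c' u : ℤ) ≤ s} ∧ Xm ∩ {u | (G.dist c' u : ℤ) ≤ s} = ∅ := by
  classical
  constructor
  · intro x hx
    have hxA₂ : x ∈ A₂ := hX (Or.inl hx)
    obtain ⟨v, hvS, hv⟩ :=
      (hG.preconnected c x).exists_dist_add_dist_le_of_separation hcover hsep hc hxA₂
    have hvx : (G.dist v x : ℤ) ≤ r - G.dist c v := by have := hp x hx; omega
    exact (hlow ⟨hxA₂, v, hvS, x, Or.inl hx, hvx, le_rfl⟩).2
  · refine Set.eq_empty_of_forall_notMem fun x ⟨hxm, hxs⟩ => ?_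
    obtain ⟨-, v, -, hv⟩ := hup ⟨hX (Or.inr hxm), hxs⟩
    exact lt_irrefl _ (hv x hxm)

theorem stmt9 {V : Type*} [Fintype V] (G : SimpleGraph V) (hG : G.Connected)
    (Xp Xm : Set V) (hdisj : Disjoint Xp Xm)
    (c : V) (r : ℤ)
    (hp : ∀ x ∈ Xp, (G.dist c x : ℤ) ≤ r)
    (hm : ∀ x ∈ Xm, ¬ ((G.dist c x : ℤ) ≤ r))
    (A₁ A₂ : Set V) (hcover : A₁ ∪ A₂ = Set.univ)
    (hsep : ∀ a b, a ∈ A₁ \ A₂ → b ∈ A₂ \ A₁ → ¬ G.Adj a b)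
    (hc : c ∈ A₁) (hX : Xp ∪ Xm ⊆ A₂)
    (c' : V) (s : ℤ) (hc' : c' ∈ A₁)
    -- `A₂ ∩ ⋃_{v ∈ S} B(v, r⁺(v)) ⊆ A₂ ∩ B(c', s)` where
    -- `B(v, r⁺(v)) = {u | ∃ x ∈ X ∩ B(v, r - dist(c,v)), dist(v,u) ≤ dist(v,x)}`
    (hlow : A₂ ∩ {u | ∃ v ∈ A₁ ∩ A₂, ∃ x ∈ Xp ∪ Xm,
        (G.dist v x : ℤ) ≤ r - G.dist c v ∧ G.dist v u ≤ G.dist v x}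
        ⊆ A₂ ∩ {u | (G.dist c' u : ℤ) ≤ s})
    -- `A₂ ∩ B(c', s) ⊆ A₂ ∩ ⋃_{v ∈ S} B(v, r⁻(v) - 1)` where
    -- `B(v, r⁻(v) - 1) = {u | ∀ x ∈ X⁻, dist(v,u) < dist(v,x)}`
    (hup : A₂ ∩ {u | (G.dist c' u : ℤ) ≤ s}
        ⊆ A₂ ∩ {u | ∃ v ∈ A₁ ∩ A₂, ∀ x ∈ Xm, G.dist v u < G.dist v x}) :
    Xp ⊆ {u | (G.dist c' u : ℤ) ≤ s} ∧ Xm ∩ {u | (G.dist c' u : ℤ) ≤ s} = ∅ :=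
  stmt9_general G hG Xp Xm c r hp A₁ A₂ hcover hsep hc hX c' s hlow hup
end

section
/- Let T be a tree with maximum degree 3 and S a set of leaves of T with |S| ≥ 2. Then there exists an edge xy of T such that both components of T - xy each contain at least |S|/3 elements of S. -/
open SimpleGraph

section aux

set_option linter.unusedSectionVars false
set_option linter.unusedVariables false

variable {V : Type*} [Fintype V] [DecidableEq V] (G : SimpleGraph V)

/-- The set of vertices reachable from `x` without using the edge `xy`. -/
def compC (x y : V) : Set V := {v | ∃ p : G.Walk x v, s(x, y) ∉ p.edges}

variable {G}

lemma self_mem_compC (x y : V) : x ∈ compC G x y := ⟨Walk.nil, by simp⟩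

lemma compC_union (hG : G.Connected) (x y : V) (v : V) :
    v ∈ compC G x y ∪ compC G y x := by
  obtain ⟨p⟩ := hG (x) v
  clear hG
  have key : ∀ a b (q : G.Walk a b), a ∈ compC G x y ∪ compC G y x →
      b ∈ compC G x y ∪ compC G y x := by
    intro a b q
    induction q with
    | nil => exact id
    | @cons a c b h q ih =>
      intro ha
      refine ih ?_
      by_cases he : s(a, c) = s(x, y)
      · rw [Sym2.eq_iff] at he
        rcases he with ⟨rfl, rfl⟩ | ⟨rfl, rfl⟩
        · exact Or.inr (self_mem_compC _ _)
        · exact Or.inl (self_mem_compC _ _)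
      · rcases ha with ⟨w, hw⟩ | ⟨w, hw⟩
        · refine Or.inl ⟨w.concat h, ?_⟩
          rw [Walk.edges_concat]
          simp only [List.concat_eq_append, List.mem_append, List.mem_singleton]
          rintro (h' | h')
          · exact hw h'
          · exact he h'.symm
        · refine Or.inr ⟨w.concat h, ?_⟩
          rw [Walk.edges_concat]
          simp only [List.concat_eq_append, List.mem_append, List.mem_singleton]
          rintro (h' | h')
          · exact hw h'
          · apply he
            rw [Sym2.eq_swap] at h'
            exact h'.symm
  exact key x v p (Or.inl (self_mem_compC x y))

lemma compC_disjoint (hG : G.IsTree) {x y : V} (hxy : G.Adj x y) (v : V) :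
    ¬ (v ∈ compC G x y ∧ v ∈ compC G y x) := by
  rintro ⟨⟨p, hp⟩, ⟨q, hq⟩⟩
  have hr : s(x, y) ∉ (p.append q.reverse).edges := by
    rw [Walk.edges_append, List.mem_append]
    rintro (h | h)
    · exact hp h
    · rw [Walk.edges_reverse, List.mem_reverse] at h
      rw [Sym2.eq_swap] at h
      exact hq h
  obtain ⟨P, _, hPuniq⟩ := hG.existsUnique_path x y
  have h1 : ((p.append q.reverse).toPath : G.Walk x y) = P :=
    hPuniq _ (p.append q.reverse).toPath.2
  have h2 : (Walk.cons hxy Walk.nil) = P := by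
    apply hPuniq
    simp [Walk.isPath_def, hxy.ne]
  have : s(x, y) ∈ (((p.append q.reverse).toPath : G.Walk x y)).edges := by
    rw [h1, ← h2]; simp
  exact hr (Walk.edges_toPath_subset _ this)

lemma not_mem_compC_self (hG : G.IsTree) {x y : V} (hxy : G.Adj x y) :
    y ∉ compC G x y :=
  fun h => compC_disjoint hG hxy y ⟨h, self_mem_compC y x⟩

lemma not_mem_support_of_avoid (hG : G.IsTree) {x y v : V} (hxy : G.Adj x y)
    (p : G.Walk x v) (hp : s(x, y) ∉ p.edges) : y ∉ p.support := by
  intro hy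
  refine not_mem_compC_self hG hxy ⟨p.takeUntil y hy, fun h => hp ?_⟩
  exact Walk.edges_takeUntil_subset p hy h

lemma compC_subset (hG : G.IsTree) {y u w : V} (hyu : G.Adj y u) (hyw : G.Adj y w)
    (huw : u ≠ w) : compC G u y ⊆ compC G y w := by
  rintro z ⟨p, hp⟩
  have hysup : y ∉ p.support := not_mem_support_of_avoid hG hyu.symm p hp
  refine ⟨Walk.cons hyu p, ?_⟩
  rw [Walk.edges_cons, List.mem_cons]
  rintro (h | h)
  · rw [Sym2.congr_right] at h
    exact huw h.symm
  · exact hysup (p.fst_mem_support_of_mem_edges h)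

lemma compC_cover (hG : G.IsTree) {y z : V} (hz : z ≠ y) :
    ∃ u, G.Adj y u ∧ z ∈ compC G u y := by
  obtain ⟨w⟩ := hG.isConnected.1 y z
  obtain ⟨p, hp⟩ := w.toPath
  cases p with
  | nil => exact absurd rfl hz.symm
  | @cons _ u _ h q =>
    refine ⟨u, h, q, fun hq => ?_⟩
    have := hp.edges_nodup
    rw [Walk.edges_cons] at this
    rw [Sym2.eq_swap] at hq
    exact (List.nodup_cons.1 this).1 hq

lemma compC_count (hG : G.IsTree) {x y : V} (hxy : G.Adj x y) (S : Set V) :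
    (S ∩ compC G x y).ncard + (S ∩ compC G y x).ncard = S.ncard := by
  rw [← Set.ncard_union_eq ?_ (Set.toFinite _) (Set.toFinite _)]
  · congr 1
    rw [← Set.inter_union_distrib_left]
    refine Set.inter_eq_left.2 fun v _ => compC_union hG.isConnected x y v
  · rw [Set.disjoint_left]
    rintro v ⟨_, hv1⟩ ⟨_, hv2⟩
    exact compC_disjoint hG hxy v ⟨hv1, hv2⟩

lemma ncard_biUnion_le' {α β : Type*} [DecidableEq α] (N : Finset α) (f : α → Set β)
    (hf : ∀ a, (f a).Finite) :
    (⋃ a ∈ N, f a).ncard ≤ ∑ a ∈ N, (f a).ncard := by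
  classical
  induction N using Finset.induction with
  | empty => simp
  | @insert a s ha ih =>
    rw [Finset.sum_insert ha, Finset.set_biUnion_insert]
    calc (f a ∪ ⋃ b ∈ s, f b).ncard
        ≤ (f a).ncard + (⋃ b ∈ s, f b).ncard := Set.ncard_union_le _ _
      _ ≤ (f a).ncard + ∑ b ∈ s, (f b).ncard := Nat.add_le_add_left ih _

end aux

/-- In a tree of maximum degree 3, for any set `S` of at least two leaves there
is an edge `xy` such that each of the two components of `T - xy` contains at
least `|S|/3` elements of `S`. (`T_{x|y}` is encoded as the set of vertices
reachable from `x` by a walk not using the edge `xy`.) -/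
theorem stmt14 {V : Type*} [Fintype V] [DecidableEq V]
    (G : SimpleGraph V) [DecidableRel G.Adj] (hG : G.IsTree)
    (hdeg : ∀ v, G.degree v ≤ 3)
    (S : Set V) (hleaf : ∀ v ∈ S, G.degree v = 1) (hS : 2 ≤ S.ncard) :
    ∃ x y, G.Adj x y ∧
      S.ncard ≤ 3 * (S ∩ {v | ∃ p : G.Walk x v, s(x, y) ∉ p.edges}).ncard ∧
      S.ncard ≤ 3 * (S ∩ {v | ∃ p : G.Walk y v, s(x, y) ∉ p.edges}).ncard := by
  classical
  -- there exists a qualifying pair (an edge with heavy second side)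
  have hQne : ∃ x y, G.Adj x y ∧ S.ncard ≤ 2 * (S ∩ compC G y x).ncard := by
    obtain ⟨a, haS⟩ := Set.nonempty_of_ncard_ne_zero (s := S) (by omega)
    have : 0 < G.degree a := by rw [hleaf a haS]; norm_num
    rw [← SimpleGraph.card_neighborFinset_eq_degree, Finset.card_pos] at this
    obtain ⟨b, hb⟩ := this
    rw [SimpleGraph.mem_neighborFinset] at hb
    have hcount := compC_count hG hb S
    rcases le_or_gt (S.ncard) (2 * (S ∩ compC G b a).ncard) with h | h
    · exact ⟨a, b, hb, h⟩
    · exact ⟨b, a, hb.symm, by omega⟩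
  -- take a qualifying pair minimizing the (vertex) size of the heavy side
  have hWne : {n | ∃ x y, (G.Adj x y ∧ S.ncard ≤ 2 * (S ∩ compC G y x).ncard) ∧
      (compC G y x).ncard = n}.Nonempty := by
    obtain ⟨x, y, h1, h2⟩ := hQne
    exact ⟨(compC G y x).ncard, x, y, ⟨h1, h2⟩, rfl⟩
  obtain ⟨x, y, ⟨hxy, hheavy⟩, hmineq⟩ := Nat.sInf_mem hWne
  -- y is a "sink": every side away from y is heavy
  have hsink : ∀ u, G.Adj y u → S.ncard ≤ 2 * (S ∩ compC G y u).ncard := by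
    intro u hyu
    by_contra hlt
    push_neg at hlt
    have hcount := compC_count hG hyu S
    have hq : S.ncard ≤ 2 * (S ∩ compC G u y).ncard := by omega
    have hWmem : (compC G u y).ncard ∈ {n | ∃ x y,
        (G.Adj x y ∧ S.ncard ≤ 2 * (S ∩ compC G y x).ncard) ∧ (compC G y x).ncard = n} :=
      ⟨y, u, ⟨hyu, hq⟩, rfl⟩
    have hne : u ≠ x := by
      rintro rfl
      have := compC_count hG hxy S
      omega
    have hsub : compC G u y ⊂ compC G y x := by
      refine ⟨compC_subset hG hyu hxy.symm hne, fun hsup => ?_⟩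
      exact not_mem_compC_self hG hyu.symm (hsup (self_mem_compC y x))
    have h1 := Set.ncard_lt_ncard hsub (Set.toFinite _)
    have h2 := Nat.sInf_le hWmem
    omega
  -- choose the heaviest side among neighbors of y
  have hyN : (G.neighborFinset y).Nonempty :=
    ⟨x, by rw [SimpleGraph.mem_neighborFinset]; exact hxy.symm⟩
  obtain ⟨u, huN, humax⟩ := Finset.exists_max_image (G.neighborFinset y)
    (fun w => (S ∩ compC G w y).ncard) hyN
  rw [SimpleGraph.mem_neighborFinset] at huN
  -- the sides at y cover S \ {y}
  have hcover : (S \ {y}).ncard ≤ ∑ w ∈ G.neighborFinset y, (S ∩ compC G w y).ncard := by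
    refine le_trans (Set.ncard_le_ncard ?_ ?_) (ncard_biUnion_le' _ _ fun a => Set.toFinite _)
    · rintro z ⟨hzS, hzy⟩
      obtain ⟨w, hw, hzw⟩ := compC_cover hG (Set.mem_singleton_iff.not.1 hzy)
      simp only [Set.mem_iUnion]
      exact ⟨w, by rw [SimpleGraph.mem_neighborFinset]; exact hw, hzS, hzw⟩
    · exact Set.toFinite _
  have hsumcard : ∑ w ∈ G.neighborFinset y, (S ∩ compC G w y).ncard
      ≤ (G.neighborFinset y).card * (S ∩ compC G u y).ncard := by
    rw [← smul_eq_mul]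
    exact Finset.sum_le_card_nsmul _ _ _ fun w hw => humax w hw
  have hdegy : (G.neighborFinset y).card = G.degree y :=
    SimpleGraph.card_neighborFinset_eq_degree G y
  -- the u-side is heavy enough
  have hbig : S.ncard ≤ 3 * (S ∩ compC G u y).ncard := by
    by_cases hyS : y ∈ S
    · -- y is a leaf: only one neighbor, whose side contains all of S \ {y}
      have hd1 : (G.neighborFinset y).card = 1 := by rw [hdegy]; exact hleaf y hyS
      rw [hd1, one_mul] at hsumcard
      have : (S \ {y}).ncard = S.ncard - 1 :=
        Set.ncard_diff_singleton_of_mem hyS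
      omega
    · have h3 : (G.neighborFinset y).card ≤ 3 := by rw [hdegy]; exact hdeg y
      have hsum3 : ∑ w ∈ G.neighborFinset y, (S ∩ compC G w y).ncard
          ≤ 3 * (S ∩ compC G u y).ncard :=
        hsumcard.trans (Nat.mul_le_mul_right _ h3)
      have : (S \ {y}).ncard = S.ncard := by rw [Set.diff_singleton_eq_self hyS]
      omega
  refine ⟨u, y, huN.symm, hbig, ?_⟩
  have hs := hsink u huN
  have heq : {v | ∃ p : G.Walk y v, s(u, y) ∉ p.edges} = compC G y u := by
    ext v
    simp only [compC, Set.mem_setOf_eq, Sym2.eq_swap]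
  rw [heq]
  omega
end

section
/- Let T be a rooted binary tree. There exists a map φ from (V(T) ∪ {⊥})³ to the set of subtrees of T such that for every Z ⊆ V(T), the image φ((Z ∪ {⊥})³) contains every connected component of T - LCA(T,Z) and every one-node subtree whose node lies in LCA(T,Z). -/
set_option linter.unusedSectionVars false
set_option linter.unusedVariables false


/-- Every coordinate of the triple `a` is `⊥` (i.e. `none`) or an element of `Z`. -/
def CodesFrom {V : Type*} (Z : Set V) (a : Option V × Option V × Option V) : Prop :=
  (∀ n, a.1 = some n → n ∈ Z) ∧ (∀ n, a.2.1 = some n → n ∈ Z) ∧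
    (∀ n, a.2.2 = some n → n ∈ Z)

namespace Stmt19
open SimpleGraph

variable {V : Type*} [DecidableEq V] {G : SimpleGraph V} (hG : G.IsTree) (root : V)

include hG

noncomputable def thePath (u v : V) : G.Walk u v := (hG.existsUnique_path u v).choose

lemma thePath_isPath (u v : V) : (thePath hG u v).IsPath :=
  (hG.existsUnique_path u v).choose_spec.1

lemma path_eq {u v : V} (p : G.Walk u v) (hp : p.IsPath) : p = thePath hG u v :=
  (hG.existsUnique_path u v).choose_spec.2 p hp

lemma anc_iff_mem {y x : V} :
    Ancestor G root y x ↔ y ∈ (thePath hG root x).support := by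
  constructor
  · intro h; exact h _ (thePath_isPath hG root x)
  · intro h p hp; rwa [path_eq hG p hp]

lemma anc_refl (x : V) : Ancestor G root x x := fun p _ => p.end_mem_support

lemma anc_root (x : V) : Ancestor G root root x := fun p _ => p.start_mem_support

/-- `takeUntil` of the root path is the root path. -/
lemma takeUntil_eq {x a : V} (h : a ∈ (thePath hG root x).support) :
    (thePath hG root x).takeUntil a h = thePath hG root a :=
  path_eq hG _ ((thePath_isPath hG root x).takeUntil h)

lemma anc_trans {a b c : V} (hab : Ancestor G root a b) (hbc : Ancestor G root b c) :
    Ancestor G root a c := by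
  rw [anc_iff_mem hG root] at hab hbc ⊢
  have := Walk.support_takeUntil_subset _ hbc
  rw [takeUntil_eq hG root hbc] at this
  exact this hab

lemma anc_antisymm {a b : V} (hab : Ancestor G root a b) (hba : Ancestor G root b a) :
    a = b := by
  rw [anc_iff_mem hG root] at hab hba
  have hsplit := ((thePath hG root b).take_spec hab).symm
  have hnd : (thePath hG root b).support.Nodup :=
    (thePath_isPath hG root b).2
  rw [takeUntil_eq hG root hab] at hsplit
  -- b is the endpoint of dropUntil, and b ∈ takeUntil = thePath root a
  have hb1 : b ∈ (thePath hG root a).support := hba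
  have hb2 : b ∈ ((thePath hG root b).dropUntil a hab).support :=
    Walk.end_mem_support _
  by_contra hne
  rw [hsplit, Walk.support_append, List.nodup_append] at hnd
  have hb2' : b ∈ ((thePath hG root b).dropUntil a hab).support.tail := by
    have hhead : ((thePath hG root b).dropUntil a hab).support =
        a :: ((thePath hG root b).dropUntil a hab).support.tail := by
      rw [Walk.support_eq_cons]; rfl
    rw [hhead] at hb2
    rcases List.mem_cons.mp hb2 with h | h
    · exact absurd h.symm hne
    · exact h
  exact hnd.2.2 b hb1 b hb2' rfl

omit hG in
lemma isPath_append {u v w : V} {p : G.Walk u v} {q : G.Walk v w} (hp : p.IsPath)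
    (hq : q.IsPath) (hd : ∀ x, x ∈ p.support → x ∈ q.support → x = v) :
    (p.append q).IsPath := by
  rw [Walk.isPath_def, Walk.support_append, List.nodup_append]
  refine ⟨hp.2, hq.2.tail, ?_⟩
  intro x hx y hx' hxy
  subst hxy
  have hxq : x ∈ q.support := List.mem_of_mem_tail hx'
  have hveq : x = v := hd x hx hxq
  have hx'' : v ∈ q.support.tail := hveq ▸ hx'
  have hcons : q.support = v :: q.support.tail := by rw [Walk.support_eq_cons]; rfl
  have hnd := hq.2
  rw [hcons, List.nodup_cons] at hnd
  exact hnd.1 hx''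

lemma anc_total {a b x : V} (ha : Ancestor G root a x) (hb : Ancestor G root b x) :
    Ancestor G root a b ∨ Ancestor G root b a := by
  rw [anc_iff_mem hG root] at ha hb
  have hsplit := ((thePath hG root x).take_spec ha)
  rw [← hsplit, Walk.mem_support_append_iff, takeUntil_eq hG root ha] at hb
  rcases hb with hb | hb
  · right; rw [anc_iff_mem hG root]; exact hb
  · left
    set D := (thePath hG root x).dropUntil a ha with hD
    have hbD : b ∈ D.support := hb
    have hW : ((thePath hG root a).append (D.takeUntil b hbD)).IsPath := by
      refine isPath_append (thePath_isPath hG root a)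
        (((thePath_isPath hG root x).dropUntil ha).takeUntil hbD) ?_
      intro y hy hy'
      -- y ∈ thePath root a = takeUntil, and y ∈ D.takeUntil b ⊆ D
      have hyD : y ∈ D.support := Walk.support_takeUntil_subset _ _ hy'
      have hnd := (thePath_isPath hG root x).2
      rw [← hsplit, Walk.support_append, List.nodup_append, takeUntil_eq hG root ha] at hnd
      by_contra hne
      have : D.support = a :: D.support.tail := by rw [Walk.support_eq_cons]; rfl
      rw [this] at hyD
      rcases List.mem_cons.mp hyD with h | h
      · exact hne h
      · exact hnd.2.2 y hy y h rfl
    have := path_eq hG _ hW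
    rw [anc_iff_mem hG root, ← this]
    rw [Walk.mem_support_append_iff]
    left; exact (thePath hG root a).end_mem_support

/-- depth of a vertex -/
noncomputable def depth (x : V) : ℕ := (thePath hG root x).length

lemma depth_lt {a b : V} (hab : Ancestor G root a b) (hne : a ≠ b) :
    depth hG root a < depth hG root b := by
  rw [anc_iff_mem hG root] at hab
  have hsplit := ((thePath hG root b).take_spec hab)
  have hlen : ((thePath hG root b).takeUntil a hab).length +
      ((thePath hG root b).dropUntil a hab).length = (thePath hG root b).length := by
    rw [← Walk.length_append, hsplit]
  have hta : ((thePath hG root b).takeUntil a hab).length = depth hG root a := by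
    rw [takeUntil_eq hG root hab]; rfl
  have hpos : ((thePath hG root b).dropUntil a hab).length ≠ 0 := fun h =>
    hne (Walk.eq_of_length_eq_zero h)
  have hdb : depth hG root b = (thePath hG root b).length := rfl
  omega

lemma depth_le {a b : V} (hab : Ancestor G root a b) :
    depth hG root a ≤ depth hG root b := by
  rcases eq_or_ne a b with rfl | hne
  · exact le_rfl
  · exact (depth_lt hG root hab hne).le

lemma anc_of_depth_le {a b x : V} (ha : Ancestor G root a x) (hb : Ancestor G root b x)
    (hd : depth hG root a ≤ depth hG root b) : Ancestor G root a b := by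
  rcases anc_total hG root ha hb with h | h
  · exact h
  · rcases eq_or_ne b a with rfl | hne
    · exact h
    · exact absurd (depth_lt hG root h hne) (by omega)

lemma path_concat {p c : V} (hadj : G.Adj p c) (hpc : Ancestor G root p c) :
    thePath hG root c = ((thePath hG root p).concat hadj : G.Walk root c) := by
  refine (path_eq hG _ ?_).symm
  rw [Walk.concat_eq_append]
  refine isPath_append (thePath_isPath hG root p) (by simp [hadj, hadj.ne]) ?_
  intro x hx hx'
  have : x = p ∨ x = c := by simpa using hx'
  rcases this with rfl | rfl
  · rfl
  · exfalso
    have hcp : Ancestor G root x p := by rw [anc_iff_mem hG root]; exact hx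
    exact hadj.ne (anc_antisymm hG root hpc hcp)

lemma anc_child_iff {p c y : V} (hadj : G.Adj p c) (hpc : Ancestor G root p c) :
    Ancestor G root y c ↔ (Ancestor G root y p ∨ y = c) := by
  rw [anc_iff_mem hG root, path_concat hG root hadj hpc, Walk.support_concat,
    List.mem_append, ← anc_iff_mem hG root]
  simp

lemma child_exists {p x : V} (hpx : Ancestor G root p x) (hne : p ≠ x) :
    ∃ c, G.Adj p c ∧ Ancestor G root p c ∧ Ancestor G root c x := by
  have hmem : p ∈ (thePath hG root x).support := (anc_iff_mem hG root).mp hpx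
  set D := (thePath hG root x).dropUntil p hmem with hD
  have hDnil : ¬ D.Nil := Walk.not_nil_of_ne hne
  obtain ⟨c, hadj, q, hq⟩ := Walk.not_nil_iff.mp hDnil
  refine ⟨c, hadj, ?_, ?_⟩
  · -- anc p c
    have hcx : Ancestor G root c x := by
      rw [anc_iff_mem hG root]
      apply Walk.support_dropUntil_subset (thePath hG root x) hmem
      rw [← hD, hq]
      simp
    rcases anc_total hG root hpx hcx with h | h
    · exact h
    · exfalso
      -- c ∈ takeUntil p and c ∈ D.support.tail, contradicting nodup
      have hcp : c ∈ ((thePath hG root x).takeUntil p hmem).support := by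
        rw [takeUntil_eq hG root hmem]
        exact (anc_iff_mem hG root).mp h
      have hnd := (thePath_isPath hG root x).2
      rw [← (thePath hG root x).take_spec hmem, Walk.support_append,
        List.nodup_append] at hnd
      refine hnd.2.2 c hcp c ?_ rfl
      rw [← hD, hq]
      simp
  · rw [anc_iff_mem hG root]
    apply Walk.support_dropUntil_subset (thePath hG root x) hmem
    rw [← hD, hq]
    simp

/-- uniqueness of the child towards a descendant -/
lemma child_unique {p c c' x : V} (h1 : G.Adj p c) (h2 : Ancestor G root p c)
    (h3 : Ancestor G root c x) (h1' : G.Adj p c') (h2' : Ancestor G root p c')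
    (h3' : Ancestor G root c' x) : c = c' := by
  rcases anc_total hG root h3 h3' with h | h
  · rcases (anc_child_iff hG root h1' h2').mp h with h' | h'
    · exact absurd (anc_antisymm hG root h2 h').symm h1.ne'
    · exact h'
  · rcases (anc_child_iff hG root h1 h2).mp h with h' | h'
    · exact absurd (anc_antisymm hG root h2' h').symm h1'.ne'
    · exact h'.symm

section LCA

variable (lca : V → V → V) (hlca : ∀ x y, IsLCA G root x y (lca x y))
include hlca

omit hG in
lemma lca_anc_left (x y : V) : Ancestor G root (lca x y) x := (hlca x y).1

omit hG in
lemma lca_anc_right (x y : V) : Ancestor G root (lca x y) y := (hlca x y).2.1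

omit hG in
lemma lca_max {x y w : V} (hx : Ancestor G root w x) (hy : Ancestor G root w y) :
    Ancestor G root w (lca x y) := (hlca x y).2.2 w hx hy

lemma lca_self (x : V) : lca x x = x :=
  anc_antisymm hG root (lca_anc_left root lca hlca x x)
    (lca_max root lca hlca (anc_refl hG root x) (anc_refl hG root x))

lemma lca_eq_of_anc {p x : V} (h : Ancestor G root p x) : lca p x = p :=
  anc_antisymm hG root (lca_anc_left root lca hlca p x)
    (lca_max root lca hlca (anc_refl hG root p) h)

lemma lca_eq_of_anc' {p x : V} (h : Ancestor G root p x) : lca x p = p :=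
  anc_antisymm hG root (lca_anc_right root lca hlca x p)
    (lca_max root lca hlca h (anc_refl hG root p))

/-- `LCAclosure` is closed under `lca`. -/
lemma lca_closed {Z : Set V} {q₁ q₂ : V} (h1 : q₁ ∈ LCAclosure lca Z)
    (h2 : q₂ ∈ LCAclosure lca Z) : lca q₁ q₂ ∈ LCAclosure lca Z := by
  obtain ⟨x, hx, y, hy, rfl⟩ := h1
  obtain ⟨x', hx', y', hy', rfl⟩ := h2
  set q₁ := lca x y
  set q₂ := lca x' y'
  by_cases h12 : Ancestor G root q₁ q₂
  · rw [lca_eq_of_anc hG root lca hlca h12]; exact ⟨x, hx, y, hy, rfl⟩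
  by_cases h21 : Ancestor G root q₂ q₁
  · rw [lca_eq_of_anc' hG root lca hlca h21]; exact ⟨x', hx', y', hy', rfl⟩
  -- incomparable case: lca q₁ q₂ = lca x x'
  have hq1x : Ancestor G root q₁ x := lca_anc_left root lca hlca x y
  have hq2x' : Ancestor G root q₂ x' := lca_anc_left root lca hlca x' y'
  have hm1 : Ancestor G root (lca q₁ q₂) q₁ := lca_anc_left root lca hlca q₁ q₂
  have hm2 : Ancestor G root (lca q₁ q₂) q₂ := lca_anc_right root lca hlca q₁ q₂
  have hmn : Ancestor G root (lca q₁ q₂) (lca x x') :=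
    lca_max root lca hlca (anc_trans hG root hm1 hq1x) (anc_trans hG root hm2 hq2x')
  have hnx : Ancestor G root (lca x x') x := lca_anc_left root lca hlca x x'
  have hnx' : Ancestor G root (lca x x') x' := lca_anc_right root lca hlca x x'
  have hnq1 : Ancestor G root (lca x x') q₁ := by
    rcases anc_total hG root hq1x hnx with h | h
    · exfalso
      refine h21 ?_
      have hq1x' : Ancestor G root q₁ x' := anc_trans hG root h hnx'
      rcases anc_total hG root hq2x' hq1x' with h' | h'
      · exact h'
      · exact absurd h' h12
    · exact h
  have hnq2 : Ancestor G root (lca x x') q₂ := by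
    rcases anc_total hG root hq2x' hnx' with h | h
    · exfalso
      refine h12 ?_
      have hq2x : Ancestor G root q₂ x := anc_trans hG root h hnx
      rcases anc_total hG root hq1x hq2x with h' | h'
      · exact h'
      · exact absurd h' h21
    · exact h
  have : lca q₁ q₂ = lca x x' :=
    anc_antisymm hG root hmn (lca_max root lca hlca hnq1 hnq2)
  rw [this]
  exact ⟨x, hx, x', hx', rfl⟩

omit hlca in
lemma mem_dropUntil_iff {m v x : V} (hmv : m ∈ (thePath hG root v).support) :
    x ∈ ((thePath hG root v).dropUntil m hmv).support ↔
      Ancestor G root m x ∧ Ancestor G root x v := by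
  constructor
  · intro hx
    have hxv : Ancestor G root x v := by
      rw [anc_iff_mem hG root]
      exact Walk.support_dropUntil_subset _ hmv hx
    refine ⟨?_, hxv⟩
    have hmvanc : Ancestor G root m v := (anc_iff_mem hG root).mpr hmv
    rcases anc_total hG root hmvanc hxv with h | h
    · exact h
    · -- x ∈ takeUntil m (= thePath root m) too; nodup forces x = m
      have hxm : x ∈ ((thePath hG root v).takeUntil m hmv).support := by
        rw [takeUntil_eq hG root hmv]
        exact (anc_iff_mem hG root).mp h
      have hnd := (thePath_isPath hG root v).2
      rw [← (thePath hG root v).take_spec hmv, Walk.support_append,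
        List.nodup_append] at hnd
      have hxd : x = m ∨ x ∈ ((thePath hG root v).dropUntil m hmv).support.tail := by
        have : ((thePath hG root v).dropUntil m hmv).support =
            m :: ((thePath hG root v).dropUntil m hmv).support.tail := by
          rw [Walk.support_eq_cons]; rfl
        rw [this] at hx
        exact List.mem_cons.mp hx
      rcases hxd with rfl | hxd
      · exact anc_refl hG root x
      · exact (hnd.2.2 x hxm x hxd rfl).elim
  · rintro ⟨hmx, hxv⟩
    have hx : x ∈ (thePath hG root v).support := (anc_iff_mem hG root).mp hxv
    rw [← (thePath hG root v).take_spec hmv, Walk.mem_support_append_iff] at hx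
    rcases hx with hx | hx
    · rw [takeUntil_eq hG root hmv, ← anc_iff_mem hG root] at hx
      have : x = m := anc_antisymm hG root hx hmx
      subst this
      exact Walk.start_mem_support _
    · exact hx

/-- The unique path between `v` and `w` via their lca. -/
lemma path_vw (v w : V) :
    (thePath hG v w : G.Walk v w) =
      (((thePath hG root v).dropUntil (lca v w)
          ((anc_iff_mem hG root).mp (lca_anc_left root lca hlca v w))).reverse.append
        ((thePath hG root w).dropUntil (lca v w)
          ((anc_iff_mem hG root).mp (lca_anc_right root lca hlca v w)))) := by
  refine (path_eq hG _ ?_).symm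
  refine isPath_append (((thePath_isPath hG root v).dropUntil _).reverse) 
    ((thePath_isPath hG root w).dropUntil _) ?_
  intro x hx hx'
  rw [Walk.support_reverse, List.mem_reverse] at hx
  rw [mem_dropUntil_iff hG root] at hx hx'
  exact (anc_antisymm hG root hx.1 (lca_max root lca hlca hx.2 hx'.2)).symm

lemma mem_path_iff {v w x : V} :
    x ∈ (thePath hG v w).support ↔
      Ancestor G root (lca v w) x ∧ (Ancestor G root x v ∨ Ancestor G root x w) := by
  rw [path_vw hG root lca hlca v w, Walk.mem_support_append_iff, Walk.support_reverse,
    List.mem_reverse, mem_dropUntil_iff hG root, mem_dropUntil_iff hG root]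
  tauto

end LCA

lemma mem_reach_iff (L : Set V) {v w : V} :
    (∃ p : G.Walk v w, ∀ x ∈ p.support, x ∉ L) ↔
      (∀ x ∈ (thePath hG v w).support, x ∉ L) := by
  constructor
  · rintro ⟨p, hp⟩
    have hb : p.bypass.IsPath := Walk.bypass_isPath p
    have := path_eq hG _ hb
    intro x hx
    rw [← this] at hx
    exact hp x (Walk.support_bypass_subset p hx)
  · intro h
    exact ⟨thePath hG v w, h⟩

omit [DecidableEq V] in
lemma conn_reach (L : Set V) (v : V) :
    ∀ u ∈ {w | ∃ p : G.Walk v w, ∀ x ∈ p.support, x ∉ L},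
      ∀ u' ∈ {w | ∃ p : G.Walk v w, ∀ x ∈ p.support, x ∉ L},
        ∃ p : G.Walk u u',
          ∀ x ∈ p.support, x ∈ {w | ∃ p : G.Walk v w, ∀ x ∈ p.support, x ∉ L} := by
  rintro u ⟨p, hp⟩ u' ⟨p', hp'⟩
  refine ⟨p.reverse.append p', ?_⟩
  intro x hx
  rw [Walk.mem_support_append_iff, Walk.support_reverse, List.mem_reverse] at hx
  rcases hx with hx | hx
  · classical
    refine ⟨p.takeUntil x hx, fun y hy => hp y (Walk.support_takeUntil_subset _ _ hy)⟩
  · classical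
    refine ⟨p'.takeUntil x hx, fun y hy => hp' y (Walk.support_takeUntil_subset _ _ hy)⟩

def reachSet (G : SimpleGraph V) (L : Set V) (v : V) : Set V :=
  {w | ∃ p : G.Walk v w, ∀ x ∈ p.support, x ∉ L}

section Reach

variable (lca : V → V → V) (hlca : ∀ x y, IsLCA G root x y (lca x y)) (L : Set V)

omit hG root in
lemma reach_not_L {v w : V} (h : w ∈ reachSet G L v) : w ∉ L := by
  obtain ⟨p, hp⟩ := h
  exact hp w p.end_mem_support

omit hG root in
lemma reach_self {v : V} (hv : v ∉ L) : v ∈ reachSet G L v := by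
  refine ⟨Walk.nil, ?_⟩
  intro x hx
  simp only [Walk.support_nil, List.mem_singleton] at hx
  rwa [hx]

include hlca in
lemma reach_iff {v w : V} :
    w ∈ reachSet G L v ↔ ∀ u ∈ L,
      ¬(Ancestor G root (lca v w) u ∧ (Ancestor G root u v ∨ Ancestor G root u w)) := by
  rw [reachSet, Set.mem_setOf_eq, mem_reach_iff hG L]
  constructor
  · rintro h u hu ⟨h1, h2⟩
    exact h u ((mem_path_iff hG root lca hlca).mpr ⟨h1, h2⟩) hu
  · intro h x hx hxL
    exact h x hxL ((mem_path_iff hG root lca hlca).mp hx)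

include hlca in
lemma seg_reach {v l : V} (hl : Ancestor G root l v)
    (hfree : ∀ t, Ancestor G root l t → Ancestor G root t v → t ∉ L) :
    l ∈ reachSet G L v := by
  rw [reach_iff hG root lca hlca L]
  rintro u hu ⟨h1, h2⟩
  rw [lca_eq_of_anc' hG root lca hlca hl] at h1
  have huv : Ancestor G root u v := by
    rcases h2 with h | h
    · exact h
    · exact anc_trans hG root h hl
  exact hfree u h1 huv hu

-- key minimality lemma: the minimum-depth element of `B` is an ancestor of
-- every element of `B`.
include hlca in
lemma B_min {Z : Set V} {v q u : V} (hv : v ∉ LCAclosure lca Z)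
    (hq : q ∈ LCAclosure lca Z) (hqB : lca q v ∈ reachSet G (LCAclosure lca Z) v)
    (hmin : ∀ u' ∈ LCAclosure lca Z, lca u' v ∈ reachSet G (LCAclosure lca Z) v →
      depth hG root q ≤ depth hG root u')
    (hu : u ∈ LCAclosure lca Z) (huB : lca u v ∈ reachSet G (LCAclosure lca Z) v) :
    Ancestor G root q u := by
  set L := LCAclosure lca Z with hL
  set l₁ := lca q v with hl₁
  set l₂ := lca u v with hl₂
  have hl₁q : Ancestor G root l₁ q := lca_anc_left root lca hlca q v
  have hl₁v : Ancestor G root l₁ v := lca_anc_right root lca hlca q v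
  have hl₂u : Ancestor G root l₂ u := lca_anc_left root lca hlca u v
  have hl₂v : Ancestor G root l₂ v := lca_anc_right root lca hlca u v
  set m := lca q u with hm
  have hmL : m ∈ L := lca_closed hG root lca hlca hq hu
  have hmq : Ancestor G root m q := lca_anc_left root lca hlca q u
  have hmu : Ancestor G root m u := lca_anc_right root lca hlca q u
  -- compare m and l₁, both ancestors of q
  rcases anc_total hG root hl₁q hmq with hcmp | hcmp
  · -- l₁ anc m
    rcases eq_or_ne m l₁ with he | hne
    · rw [he] at hmL
      exact absurd hmL (reach_not_L _ hqB)
    · -- m strictly below l₁ : lca m v = l₁, so m ∈ B, minimality forces m = q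
      have hlmv : lca m v = l₁ := by
        refine anc_antisymm hG root ?_ ?_
        · exact lca_max root lca hlca
            (anc_trans hG root (lca_anc_left root lca hlca m v) hmq)
            (lca_anc_right root lca hlca m v)
        · exact lca_max root lca hlca hcmp hl₁v
      have hmB : lca m v ∈ reachSet G L v := by rw [hlmv]; exact hqB
      have h1 : depth hG root q ≤ depth hG root m := hmin m hmL hmB
      have h2 : m = q := by
        rcases eq_or_ne m q with h | h
        · exact h
        · exact absurd (depth_lt hG root hmq h) (by omega)
      rw [← h2]
      exact hmu
  · -- m anc l₁, hence m anc v
    have hmv : Ancestor G root m v := anc_trans hG root hcmp hl₁v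
    rcases anc_total hG root hl₁v hl₂v with h12 | h21
    · -- l₁ anc l₂ : l₁ is a common ancestor of q and u, so l₁ anc m, hence m = l₁
      have : Ancestor G root l₁ m :=
        lca_max root lca hlca hl₁q (anc_trans hG root h12 hl₂u)
      have : m = l₁ := anc_antisymm hG root hcmp this
      rw [this] at hmL
      exact absurd hmL (reach_not_L _ hqB)
    · -- l₂ anc l₁ : l₂ is a common ancestor of q and u, so l₂ anc m;
      -- m lies on the path from v to l₂, which avoids L
      have hl₂m : Ancestor G root l₂ m :=
        lca_max root lca hlca (anc_trans hG root h21 hl₁q) hl₂u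
      have hmem : m ∈ (thePath hG v l₂).support := by
        rw [mem_path_iff hG root lca hlca]
        refine ⟨?_, Or.inl hmv⟩
        rw [lca_eq_of_anc' hG root lca hlca hl₂v]
        exact hl₂m
      have := (mem_reach_iff hG L).mp huB m hmem
      exact absurd hmL this

include hlca in
lemma case_univ {v : V} (hA : ∀ u ∈ L, ¬ Ancestor G root u v)
    (hB : ∀ u ∈ L, lca u v ∉ reachSet G L v) : reachSet G L v = Set.univ := by
  ext w
  simp only [Set.mem_univ, iff_true]
  rw [reach_iff hG root lca hlca L]
  rintro u hu ⟨h1, h2⟩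
  rcases h2 with h | h
  · exact hA u hu h
  · refine hB u hu ?_
    refine seg_reach hG root lca hlca L (lca_anc_right root lca hlca u v) ?_
    intro t _ h2t htL
    exact hA t htL h2t

include hlca in
lemma case_noA {Z : Set V} {v q : V} (hA : ∀ u ∈ LCAclosure lca Z, ¬ Ancestor G root u v)
    (hq : q ∈ LCAclosure lca Z)
    (hqB : lca q v ∈ reachSet G (LCAclosure lca Z) v)
    (hmin : ∀ u' ∈ LCAclosure lca Z, lca u' v ∈ reachSet G (LCAclosure lca Z) v →
      depth hG root q ≤ depth hG root u') (hv : v ∉ LCAclosure lca Z) :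
    reachSet G (LCAclosure lca Z) v = {w | ¬ Ancestor G root q w} := by
  set L := LCAclosure lca Z with hL
  ext w
  constructor
  · intro hw
    simp only [Set.mem_setOf_eq]
    intro hqw
    refine (reach_iff hG root lca hlca L).mp hw q hq ⟨?_, Or.inr hqw⟩
    rcases anc_total hG root (lca_anc_right root lca hlca v w) hqw with h | h
    · exact h
    · exact absurd (anc_trans hG root h (lca_anc_left root lca hlca v w)) (hA q hq)
  · intro hw
    simp only [Set.mem_setOf_eq] at hw
    rw [reach_iff hG root lca hlca L]
    rintro u hu ⟨h1, h2⟩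
    rcases h2 with h | h
    · exact hA u hu h
    · have huB : lca u v ∈ reachSet G L v := by
        refine seg_reach hG root lca hlca L (lca_anc_right root lca hlca u v) ?_
        intro t _ h2t htL
        exact hA t htL h2t
      have := B_min hG root lca hlca hv hq hqB hmin hu huB
      exact hw (anc_trans hG root this h)

include hlca in
lemma no_L_below {Z : Set V} {v p c₁ u : V}
    (hpv : Ancestor G root p v)
    (hmax : ∀ u' ∈ LCAclosure lca Z, Ancestor G root u' v →
      depth hG root u' ≤ depth hG root p)
    (hB : ∀ u' ∈ LCAclosure lca Z, lca u' v ∉ reachSet G (LCAclosure lca Z) v)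
    (hc1 : G.Adj p c₁) (hc2 : Ancestor G root p c₁) (hc3 : Ancestor G root c₁ v)
    (hu : u ∈ LCAclosure lca Z) (hcu : Ancestor G root c₁ u) : False := by
  set L := LCAclosure lca Z with hL
  refine hB u hu ?_
  refine seg_reach hG root lca hlca L (lca_anc_right root lca hlca u v) ?_
  intro t h1t h2t htL
  have hct : Ancestor G root c₁ t :=
    anc_trans hG root (lca_max root lca hlca hcu hc3) h1t
  have hpt : Ancestor G root p t := anc_trans hG root hc2 hct
  have hne : p ≠ t := by
    rintro rfl
    exact hc1.ne (anc_antisymm hG root hc2 hct)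
  exact absurd (hmax t htL h2t) (by have := depth_lt hG root hpt hne; omega)

include hlca in
lemma case_A_noB {Z : Set V} {v p c₁ : V} (hpL : p ∈ LCAclosure lca Z)
    (hpv : Ancestor G root p v)
    (hmax : ∀ u' ∈ LCAclosure lca Z, Ancestor G root u' v →
      depth hG root u' ≤ depth hG root p)
    (hB : ∀ u' ∈ LCAclosure lca Z, lca u' v ∉ reachSet G (LCAclosure lca Z) v)
    (hc1 : G.Adj p c₁) (hc2 : Ancestor G root p c₁) (hc3 : Ancestor G root c₁ v) :
    reachSet G (LCAclosure lca Z) v = {w | Ancestor G root c₁ w} := by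
  set L := LCAclosure lca Z with hL
  ext w
  constructor
  · intro hw
    simp only [Set.mem_setOf_eq]
    rcases anc_total hG root hc3 (lca_anc_left root lca hlca v w) with h | h
    · exact anc_trans hG root h (lca_anc_right root lca hlca v w)
    · rcases (anc_child_iff hG root hc1 hc2).mp h with h' | h'
      · exact absurd ((reach_iff hG root lca hlca L).mp hw p hpL ⟨h', Or.inl hpv⟩)
          (by simp)
      · rw [← h']
        exact lca_anc_right root lca hlca v w
  · intro hw
    simp only [Set.mem_setOf_eq] at hw
    rw [reach_iff hG root lca hlca L]
    rintro u hu ⟨h1, h2⟩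
    have hcm : Ancestor G root c₁ (lca v w) := lca_max root lca hlca hc3 hw
    exact no_L_below hG root lca hlca hpv hmax hB hc1 hc2 hc3 hu
      (anc_trans hG root hcm h1)

-- common branching argument: if the children of `p` towards `y` and `z`
-- differ, then `lca y z = p`.
include hlca in
lemma lca_eq_p {p y z cy cz : V}
    (hy1 : G.Adj p cy) (hy2 : Ancestor G root p cy) (hy3 : Ancestor G root cy y)
    (hz1 : G.Adj p cz) (hz2 : Ancestor G root p cz) (hz3 : Ancestor G root cz z)
    (hne : cy ≠ cz) : lca y z = p := by
  have hpy : Ancestor G root p y := anc_trans hG root hy2 hy3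
  have hpz : Ancestor G root p z := anc_trans hG root hz2 hz3
  have hpt : Ancestor G root p (lca y z) := lca_max root lca hlca hpy hpz
  rcases anc_total hG root (lca_anc_left root lca hlca y z) hpy with h | h
  · exact anc_antisymm hG root h hpt
  · rcases eq_or_ne (lca y z) p with he | hne'
    · exact he
    · exfalso
      obtain ⟨ct, hct1, hct2, hct3⟩ := child_exists hG root h (Ne.symm hne')
      have hcty : Ancestor G root ct y :=
        anc_trans hG root hct3 (lca_anc_left root lca hlca y z)
      have hctz : Ancestor G root ct z :=
        anc_trans hG root hct3 (lca_anc_right root lca hlca y z)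
      have e1 : ct = cy := child_unique hG root hct1 hct2 hcty hy1 hy2 hy3
      have e2 : ct = cz := child_unique hG root hct1 hct2 hctz hz1 hz2 hz3
      exact hne (e1 ▸ e2)

include hlca in
lemma case_A_B {Z : Set V} {v p q : V} (hv : v ∉ LCAclosure lca Z)
    (hpL : p ∈ LCAclosure lca Z) (hpv : Ancestor G root p v)
    (hmax : ∀ u' ∈ LCAclosure lca Z, Ancestor G root u' v →
      depth hG root u' ≤ depth hG root p)
    (hqL : q ∈ LCAclosure lca Z)
    (hqB : lca q v ∈ reachSet G (LCAclosure lca Z) v)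
    (hmin : ∀ u' ∈ LCAclosure lca Z, lca u' v ∈ reachSet G (LCAclosure lca Z) v →
      depth hG root q ≤ depth hG root u') :
    Ancestor G root p q ∧ p ≠ q ∧
      reachSet G (LCAclosure lca Z) v =
        {w | Ancestor G root p w ∧ ¬ Ancestor G root q w ∧ lca w q ≠ p} := by
  set L := LCAclosure lca Z with hL
  have hl₁q : Ancestor G root (lca q v) q := lca_anc_left root lca hlca q v
  have hl₁v : Ancestor G root (lca q v) v := lca_anc_right root lca hlca q v
  have hl₁nL : lca q v ∉ L := reach_not_L _ hqB
  -- p is a strict ancestor of l₁ := lca q v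
  have hpl₁ : Ancestor G root p (lca q v) := by
    rcases anc_total hG root hpv hl₁v with h | h
    · exact h
    · exfalso
      have hmem : p ∈ (thePath hG v (lca q v)).support := by
        rw [mem_path_iff hG root lca hlca, lca_eq_of_anc' hG root lca hlca hl₁v]
        exact ⟨h, Or.inl hpv⟩
      exact (mem_reach_iff hG L).mp hqB p hmem hpL
  have hpl₁ne : p ≠ lca q v := by rintro rfl; exact hl₁nL hpL
  have hpq : Ancestor G root p q := anc_trans hG root hpl₁ hl₁q
  have hpqne : p ≠ q := by
    rintro rfl
    exact hpl₁ne (anc_antisymm hG root hpl₁ hl₁q)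
  refine ⟨hpq, hpqne, ?_⟩
  -- the child of p towards v
  obtain ⟨c₁, hc1, hc2, hc3⟩ := child_exists hG root hpv (by rintro rfl; exact hv hpL)
  have hc₁l₁ : Ancestor G root c₁ (lca q v) := by
    rcases anc_total hG root hc3 hl₁v with h | h
    · exact h
    · rcases (anc_child_iff hG root hc1 hc2).mp h with h' | h'
      · exact absurd (anc_antisymm hG root hpl₁ h') hpl₁ne
      · rw [← h']; exact anc_refl hG root _
  have hc₁q : Ancestor G root c₁ q := anc_trans hG root hc₁l₁ hl₁q
  -- the "A side": no element of L is strictly below p and an ancestor of v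
  have hAside : ∀ u ∈ L, Ancestor G root u v → Ancestor G root p u → u = p := by
    intro u hu h1 h2
    rcases eq_or_ne u p with he | hne
    · exact he
    · exact absurd (hmax u hu h1)
        (by have := depth_lt hG root h2 (Ne.symm hne); omega)
  ext w
  constructor
  · intro hw
    have hreach := (reach_iff hG root lca hlca L).mp hw
    -- p anc w
    have hpw : Ancestor G root p w := by
      rcases anc_total hG root hpv (lca_anc_left root lca hlca v w) with h | h
      · exact anc_trans hG root h (lca_anc_right root lca hlca v w)
      · exact absurd (hreach p hpL ⟨h, Or.inl hpv⟩) (by simp)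
    -- c₁ anc w
    have hc₁w : Ancestor G root c₁ w := by
      rcases anc_total hG root hc3 (lca_anc_left root lca hlca v w) with h | h
      · exact anc_trans hG root h (lca_anc_right root lca hlca v w)
      · rcases (anc_child_iff hG root hc1 hc2).mp h with h' | h'
        · exact absurd (hreach p hpL ⟨h', Or.inl hpv⟩) (by simp)
        · rw [← h']
          exact lca_anc_right root lca hlca v w
    refine ⟨hpw, ?_, ?_⟩
    · intro hqw
      rcases anc_total hG root (lca_anc_right root lca hlca v w) hqw with h | h
      · exact (hreach q hqL ⟨h, Or.inr hqw⟩).elim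
      · have hqv : Ancestor G root q v :=
          anc_trans hG root h (lca_anc_left root lca hlca v w)
        have := hAside q hqL hqv hpq
        exact hpqne this.symm
    · intro heq
      have : Ancestor G root c₁ (lca w q) := lca_max root lca hlca hc₁w hc₁q
      rw [heq] at this
      exact hc1.ne (anc_antisymm hG root hc2 this)
  · rintro ⟨hw1, hw2, hw3⟩
    have hwp : w ≠ p := by
      rintro rfl
      exact hw3 (lca_eq_of_anc hG root lca hlca hpq)
    obtain ⟨cw, hcw1, hcw2, hcw3⟩ := child_exists hG root hw1 (Ne.symm hwp)
    -- the child towards w must be c₁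
    have hcwc₁ : cw = c₁ := by
      by_contra hne
      exact hw3 (lca_eq_p hG root lca hlca hcw1 hcw2 hcw3 hc1 hc2 hc₁q hne)
    have hc₁w : Ancestor G root c₁ w := hcwc₁ ▸ hcw3
    rw [reach_iff hG root lca hlca L]
    rintro u hu ⟨h1, h2⟩
    have hc₁m : Ancestor G root c₁ (lca v w) := lca_max root lca hlca hc3 hc₁w
    have hc₁u : Ancestor G root c₁ u := anc_trans hG root hc₁m h1
    have hpu : Ancestor G root p u := anc_trans hG root hc2 hc₁u
    have hune : u ≠ p := by
      rintro rfl
      exact hc1.ne (anc_antisymm hG root hc2 hc₁u)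
    rcases h2 with h | h
    · exact hune (hAside u hu h hpu)
    · -- u is "below" the component: u ∈ B, so q anc u, contradiction with ¬ q anc w
      have huB : lca u v ∈ reachSet G L v := by
        refine seg_reach hG root lca hlca L (lca_anc_right root lca hlca u v) ?_
        intro t h1t h2t htL
        have hct : Ancestor G root c₁ t :=
          anc_trans hG root (lca_max root lca hlca hc₁u hc3) h1t
        have hpt : Ancestor G root p t := anc_trans hG root hc2 hct
        have htne : t ≠ p := by
          rintro rfl
          exact hc1.ne (anc_antisymm hG root hc2 hct)
        exact htne (hAside t htL h2t hpt)
      have := B_min hG root lca hlca hv hqL hqB hmin hu huB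
      exact hw2 (anc_trans hG root this h)

end Reach

section Codes

variable (lca : V → V → V) (hlca : ∀ x y, IsLCA G root x y (lca x y))

include hlca in
lemma Z_sub_L {Z : Set V} {x : V} (hx : x ∈ Z) : x ∈ LCAclosure lca Z :=
  ⟨x, hx, x, hx, (lca_self hG root lca hlca x).symm⟩

include hlca in
lemma code_select {p q x a b : V} (hpq : Ancestor G root p q) (hne : p ≠ q)
    (hpab : p = lca a b) (hqx : Ancestor G root q x) :
    lca a x = p ∨ lca b x = p := by
  have hpa : Ancestor G root p a := hpab ▸ lca_anc_left root lca hlca a b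
  have hpb : Ancestor G root p b := hpab ▸ lca_anc_right root lca hlca a b
  have hpx : Ancestor G root p x := anc_trans hG root hpq hqx
  have hpxne : p ≠ x := by
    rintro rfl
    exact hne (anc_antisymm hG root hpq hqx)
  rcases eq_or_ne a p with rfl | ha
  · exact Or.inl (lca_eq_of_anc hG root lca hlca hpx)
  rcases eq_or_ne b p with rfl | hb
  · exact Or.inr (lca_eq_of_anc hG root lca hlca hpx)
  obtain ⟨ca, hca1, hca2, hca3⟩ := child_exists hG root hpa (Ne.symm ha)
  obtain ⟨cb, hcb1, hcb2, hcb3⟩ := child_exists hG root hpb (Ne.symm hb)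
  obtain ⟨cx, hcx1, hcx2, hcx3⟩ := child_exists hG root hpx hpxne
  have hcab : ca ≠ cb := by
    rintro rfl
    have : Ancestor G root ca (lca a b) := lca_max root lca hlca hca3 hcb3
    rw [← hpab] at this
    exact hca1.ne (anc_antisymm hG root hca2 this)
  rcases eq_or_ne ca cx with he | hne'
  · refine Or.inr (lca_eq_p hG root lca hlca hcb1 hcb2 hcb3 hcx1 hcx2 hcx3 ?_)
    intro h
    exact hcab (he.trans h.symm)
  · exact Or.inl (lca_eq_p hG root lca hlca hca1 hca2 hca3 hcx1 hcx2 hcx3 hne')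

include hlca in
lemma case3_pZ {Z : Set V} {v p c₁ : V} (hpL : p ∈ LCAclosure lca Z)
    (hpv : Ancestor G root p v)
    (hmax : ∀ u' ∈ LCAclosure lca Z, Ancestor G root u' v →
      depth hG root u' ≤ depth hG root p)
    (hB : ∀ u' ∈ LCAclosure lca Z, lca u' v ∉ reachSet G (LCAclosure lca Z) v)
    (hc1 : G.Adj p c₁) (hc2 : Ancestor G root p c₁) (hc3 : Ancestor G root c₁ v)
    (hbinary : ∀ t, {c | G.Adj t c ∧ Ancestor G root t c}.ncard ≤ 2) [Fintype V] :
    p ∈ Z := by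
  obtain ⟨a, ha, b, hb, hpab⟩ := hpL
  have hZc₁ : ∀ x ∈ Z, ¬ Ancestor G root c₁ x := fun x hx hcx =>
    no_L_below hG root lca hlca hpv hmax hB hc1 hc2 hc3
      (Z_sub_L hG root lca hlca hx) hcx
  by_contra hp
  have hpa : Ancestor G root p a := hpab ▸ lca_anc_left root lca hlca a b
  have hpb : Ancestor G root p b := hpab ▸ lca_anc_right root lca hlca a b
  have hane : a ≠ p := by rintro rfl; exact hp ha
  have hbne : b ≠ p := by rintro rfl; exact hp hb
  obtain ⟨ca, hca1, hca2, hca3⟩ := child_exists hG root hpa (Ne.symm hane)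
  obtain ⟨cb, hcb1, hcb2, hcb3⟩ := child_exists hG root hpb (Ne.symm hbne)
  have hcab : ca ≠ cb := by
    rintro rfl
    have : Ancestor G root ca (lca a b) := lca_max root lca hlca hca3 hcb3
    rw [← hpab] at this
    exact hca1.ne (anc_antisymm hG root hca2 this)
  have hcac₁ : ca ≠ c₁ := by
    rintro rfl
    exact hZc₁ a ha hca3
  have hcbc₁ : cb ≠ c₁ := by
    rintro rfl
    exact hZc₁ b hb hcb3
  -- three distinct children of p, contradicting binarity
  have hsub : ({c₁, ca, cb} : Set V) ⊆ {c | G.Adj p c ∧ Ancestor G root p c} := by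
    rintro x (rfl | rfl | rfl)
    · exact ⟨hc1, hc2⟩
    · exact ⟨hca1, hca2⟩
    · exact ⟨hcb1, hcb2⟩
  have h3 : ({c₁, ca, cb} : Set V).ncard = 3 := by
    rw [Set.ncard_insert_of_notMem (by simp [hcac₁.symm, hcbc₁.symm]) (Set.toFinite _),
      Set.ncard_pair hcab]
  have := Set.ncard_le_ncard hsub (Set.toFinite _)
  have := hbinary p
  omega

include hlca in
lemma no_L_strict_below {Z : Set V} {p : V}
    (h3b : ∀ x ∈ Z, Ancestor G root p x → x = p) :
    ∀ u ∈ LCAclosure lca Z, Ancestor G root p u → u = p := by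
  rintro u ⟨a, ha, b, hb, rfl⟩ hpu
  have hua : Ancestor G root (lca a b) a := lca_anc_left root lca hlca a b
  have hap : a = p := h3b a ha (anc_trans hG root hpu hua)
  subst hap
  exact anc_antisymm hG root (lca_anc_left root lca hlca a b) hpu

include hlca in
lemma code3a_eq {Z : Set V} {v p c₁ b : V}
    (hpv : Ancestor G root p v)
    (hmax : ∀ u' ∈ LCAclosure lca Z, Ancestor G root u' v →
      depth hG root u' ≤ depth hG root p)
    (hB : ∀ u' ∈ LCAclosure lca Z, lca u' v ∉ reachSet G (LCAclosure lca Z) v)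
    (hc1 : G.Adj p c₁) (hc2 : Ancestor G root p c₁) (hc3 : Ancestor G root c₁ v)
    (hbinary : ∀ t, {c | G.Adj t c ∧ Ancestor G root t c}.ncard ≤ 2)
    (hbZ : b ∈ Z) (hpb : Ancestor G root p b) (hbp : b ≠ p) [Fintype V] :
    {w | Ancestor G root p w ∧ w ≠ p ∧ lca b w = p} = {w | Ancestor G root c₁ w} := by
  have hZc₁ : ∀ x ∈ Z, ¬ Ancestor G root c₁ x := fun x hx hcx =>
    no_L_below hG root lca hlca hpv hmax hB hc1 hc2 hc3
      (Z_sub_L hG root lca hlca hx) hcx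
  obtain ⟨cb, hcb1, hcb2, hcb3⟩ := child_exists hG root hpb (Ne.symm hbp)
  have hcbc₁ : cb ≠ c₁ := by
    rintro rfl
    exact hZc₁ b hbZ hcb3
  ext w
  simp only [Set.mem_setOf_eq]
  constructor
  · rintro ⟨hw1, hw2, hw3⟩
    obtain ⟨cw, hcw1, hcw2, hcw3⟩ := child_exists hG root hw1 (Ne.symm hw2)
    rcases eq_or_ne cw c₁ with rfl | hne
    · exact hcw3
    · exfalso
      rcases eq_or_ne cw cb with rfl | hne'
      · -- cw = cb : then cw anc both b and w, so lca b w below cw ≠ p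
        have : Ancestor G root cw (lca b w) := lca_max root lca hlca hcb3 hcw3
        rw [hw3] at this
        exact hcw1.ne (anc_antisymm hG root hcw2 this)
      · -- three distinct children
        have hsub : ({c₁, cb, cw} : Set V) ⊆ {c | G.Adj p c ∧ Ancestor G root p c} := by
          rintro x (rfl | rfl | rfl)
          · exact ⟨hc1, hc2⟩
          · exact ⟨hcb1, hcb2⟩
          · exact ⟨hcw1, hcw2⟩
        have h3 : ({c₁, cb, cw} : Set V).ncard = 3 := by
          rw [Set.ncard_insert_of_notMem (by simp [hcbc₁, hne, hne']; tauto)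
            (Set.toFinite _), Set.ncard_pair (fun h => hne' (h.symm))]
        have := Set.ncard_le_ncard hsub (Set.toFinite _)
        have := hbinary p
        omega
  · intro hw
    have hpw : Ancestor G root p w := anc_trans hG root hc2 hw
    have hwp : w ≠ p := by
      rintro rfl
      exact hc1.ne (anc_antisymm hG root hc2 hw)
    refine ⟨hpw, hwp, ?_⟩
    exact lca_eq_p hG root lca hlca hcb1 hcb2 hcb3 hc1 hc2 hw hcbc₁

end Codes

section Kids

variable [Fintype V]

omit hG in
noncomputable def vord : LinearOrder V :=
  LinearOrder.lift' (fun v => (Fintype.equivFin V v : ℕ))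
    (fun a b h => (Fintype.equivFin V).injective (Fin.val_injective h))

noncomputable def kidsF (G' : SimpleGraph V) (root' p : V) : Finset V :=
  (Set.toFinite {c | G'.Adj p c ∧ Ancestor G' root' p c}).toFinset

lemma mem_kidsF {p c : V} : c ∈ kidsF G root p ↔ G.Adj p c ∧ Ancestor G root p c :=
  Set.Finite.mem_toFinset _

lemma kidsF_card {p : V} (hb : {c | G.Adj p c ∧ Ancestor G root p c}.ncard ≤ 2) :
    (kidsF G root p).card ≤ 2 := by
  rwa [kidsF, ← Set.ncard_eq_toFinset_card]

lemma child_min_or_max {p c₁ : V}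
    (hb : {c | G.Adj p c ∧ Ancestor G root p c}.ncard ≤ 2)
    (hc : c₁ ∈ kidsF G root p) :
    c₁ = @Finset.min' V vord (kidsF G root p) ⟨c₁, hc⟩ ∨
      c₁ = @Finset.max' V vord (kidsF G root p) ⟨c₁, hc⟩ := by
  letI := (vord : LinearOrder V)
  by_contra hcon
  push_neg at hcon
  obtain ⟨h1, h2⟩ := hcon
  set s := kidsF G root p
  have hne : s.Nonempty := ⟨c₁, hc⟩
  have hminmem : s.min' hne ∈ s := Finset.min'_mem s hne
  have hmaxmem : s.max' hne ∈ s := Finset.max'_mem s hne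
  have hminmax : s.min' hne ≠ s.max' hne := by
    intro h
    refine h1 (le_antisymm ?_ ?_).symm
    · exact Finset.min'_le s c₁ hc
    · rw [h]; exact Finset.le_max' s c₁ hc
  have hsub : ({s.min' hne, s.max' hne, c₁} : Finset V) ⊆ s := by
    intro x hx
    rcases Finset.mem_insert.mp hx with rfl | hx
    · exact hminmem
    rcases Finset.mem_insert.mp hx with rfl | hx
    · exact hmaxmem
    · rw [Finset.mem_singleton.mp hx]; exact hc
  have hcard : ({s.min' hne, s.max' hne, c₁} : Finset V).card = 3 := by
    rw [Finset.card_insert_of_notMem (by simp [hminmax, Ne.symm h1]; exact Ne.symm h1),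
      Finset.card_insert_of_notMem (by simp [Ne.symm h2]; exact Ne.symm h2), Finset.card_singleton]
  have hle := Finset.card_le_card hsub
  have h2' : s.card ≤ 2 := kidsF_card hG root hb
  omega

end Kids

def ConnIn (G : SimpleGraph V) (S : Set V) : Prop :=
  ∀ u ∈ S, ∀ v ∈ S, ∃ p : G.Walk u v, ∀ x ∈ p.support, x ∈ S

noncomputable def rawφ (G' : SimpleGraph V) (root' : V) (lca : V → V → V) [Fintype V] :
    Option V × Option V × Option V → Set V := fun a =>
  match a with
  | (none, none, none) => Set.univ
  | (some p, none, none) =>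
      if h : (kidsF G' root' p).Nonempty
      then {w | Ancestor G' root' (@Finset.min' V vord _ h) w} else ∅
  | (none, some p, none) =>
      if h : (kidsF G' root' p).Nonempty
      then {w | Ancestor G' root' (@Finset.max' V vord _ h) w} else ∅
  | (none, none, some _) => ∅
  | (some x, none, some y) => {lca x y}
  | (none, some x, some y) => {w | ¬ Ancestor G' root' (lca x y) w}
  | (some p, some b, none) => {w | Ancestor G' root' p w ∧ w ≠ p ∧ lca b w = p}
  | (some c, some x, some y) =>
      {w | Ancestor G' root' (lca c x) w ∧ ¬ Ancestor G' root' (lca x y) w ∧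
        lca w (lca x y) ≠ lca c x}

end Stmt19

open Stmt19

/-- For a rooted binary tree `T`, there is a map `φ` from triples over
`V(T) ∪ {⊥}` to subtrees of `T` such that for every `Z ⊆ V(T)`, every component
of `T - LCA(T,Z)` and every one-node subtree at a node of `LCA(T,Z)` is the
image of a triple with entries from `Z ∪ {⊥}`. -/
theorem stmt19 {V : Type*} [Fintype V] (G : SimpleGraph V) (hG : G.IsTree)
    (root : V) (lca : V → V → V) (hlca : ∀ x y, IsLCA G root x y (lca x y))
    (hbinary : ∀ v, {c | G.Adj v c ∧ Ancestor G root v c}.ncard ≤ 2) :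
    ∃ φ : Option V × Option V × Option V → Set V,
      -- the values of `φ` are subtrees, i.e. connected subgraphs of `T`
      (∀ a, ∀ u ∈ φ a, ∀ v ∈ φ a, ∃ p : G.Walk u v, ∀ x ∈ p.support, x ∈ φ a) ∧
      ∀ Z : Set V,
        (∀ C : Set V, IsComponentAvoiding G (LCAclosure lca Z) C →
          ∃ a, CodesFrom Z a ∧ φ a = C) ∧
        (∀ z ∈ LCAclosure lca Z, ∃ a, CodesFrom Z a ∧ φ a = {z}) := by
  classical
  refine ⟨fun a => if H : ConnIn G (rawφ G root lca a) then rawφ G root lca a else ∅,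
    ?_, ?_⟩
  · intro a u hu w hw
    dsimp only at hu hw ⊢
    by_cases H : ConnIn G (rawφ G root lca a)
    · rw [dif_pos H] at hu hw ⊢
      exact H u hu w hw
    · rw [dif_neg H] at hu
      exact absurd hu (Set.notMem_empty u)
  intro Z
  set L := LCAclosure lca Z with hLdef
  constructor
  · rintro C ⟨v, hv, rfl⟩
    have hCr : {w | ∃ p : G.Walk v w, ∀ x ∈ p.support, x ∉ L} = reachSet G L v := rfl
    rw [hCr]
    have hconnC : ConnIn G (reachSet G L v) := conn_reach hG L v
    by_cases hB : ∃ u ∈ L, lca u v ∈ reachSet G L v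
    · -- B nonempty: pick minimum-depth element q
      obtain ⟨u₀, hu₀1, hu₀2⟩ := hB
      have hfin : {u | u ∈ L ∧ lca u v ∈ reachSet G L v}.Finite := Set.toFinite _
      obtain ⟨q, hqmem, hqmin'⟩ := Finset.exists_min_image hfin.toFinset (depth hG root)
        ⟨u₀, hfin.mem_toFinset.mpr ⟨hu₀1, hu₀2⟩⟩
      rw [Set.Finite.mem_toFinset] at hqmem
      have hqL : q ∈ L := hqmem.1
      have hqB : lca q v ∈ reachSet G L v := hqmem.2
      have hmin : ∀ u' ∈ L, lca u' v ∈ reachSet G L v →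
          depth hG root q ≤ depth hG root u' :=
        fun u' h1 h2 => hqmin' u' (hfin.mem_toFinset.mpr ⟨h1, h2⟩)
      obtain ⟨x, hx, y, hy, hqxy⟩ := id hqL
      by_cases hA : ∃ u ∈ L, Ancestor G root u v
      · -- Case 4: both p and q exist.
        obtain ⟨w₀, hw₀1, hw₀2⟩ := hA
        have hfinA : {u | u ∈ L ∧ Ancestor G root u v}.Finite := Set.toFinite _
        obtain ⟨p, hpmem, hpmax'⟩ := Finset.exists_max_image hfinA.toFinset
          (depth hG root) ⟨w₀, hfinA.mem_toFinset.mpr ⟨hw₀1, hw₀2⟩⟩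
        rw [Set.Finite.mem_toFinset] at hpmem
        have hpL : p ∈ L := hpmem.1
        have hpv : Ancestor G root p v := hpmem.2
        have hmax : ∀ u' ∈ L, Ancestor G root u' v →
            depth hG root u' ≤ depth hG root p :=
          fun u' h1 h2 => hpmax' u' (hfinA.mem_toFinset.mpr ⟨h1, h2⟩)
        obtain ⟨hpq, hpqne, heq⟩ :=
          case_A_B hG root lca hlca hv hpL hpv hmax hqL hqB hmin
        obtain ⟨a, ha, b, hb, hpab⟩ := hpL
        have hqx : Ancestor G root q x := hqxy ▸ lca_anc_left root lca hlca x y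
        have hsel := code_select hG root lca hlca hpq hpqne hpab hqx
        rcases hsel with hsel | hsel
        · refine ⟨(some a, some x, some y), ⟨?_, ?_, ?_⟩, ?_⟩
          · intro n h; cases h; exact ha
          · intro n h; cases h; exact hx
          · intro n h; cases h; exact hy
          · have hraw : rawφ G root lca (some a, some x, some y) =
                reachSet G L v := by
              show {w | Ancestor G root (lca a x) w ∧
                ¬ Ancestor G root (lca x y) w ∧ lca w (lca x y) ≠ lca a x} = _
              rw [hsel, ← hqxy, heq]
            dsimp only
            rw [dif_pos (hraw ▸ hconnC), hraw]
        · refine ⟨(some b, some x, some y), ⟨?_, ?_, ?_⟩, ?_⟩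
          · intro n h; cases h; exact hb
          · intro n h; cases h; exact hx
          · intro n h; cases h; exact hy
          · have hraw : rawφ G root lca (some b, some x, some y) =
                reachSet G L v := by
              show {w | Ancestor G root (lca b x) w ∧
                ¬ Ancestor G root (lca x y) w ∧ lca w (lca x y) ≠ lca b x} = _
              rw [hsel, ← hqxy, heq]
            dsimp only
            rw [dif_pos (hraw ▸ hconnC), hraw]
      · -- Case 2: no ancestor of v in L, but q exists
        push_neg at hA
        refine ⟨(none, some x, some y), ⟨nofun, ?_, ?_⟩, ?_⟩
        · intro n h; cases h; exact hx
        · intro n h; cases h; exact hy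
        · have hraw : rawφ G root lca (none, some x, some y) = reachSet G L v := by
            show {w | ¬ Ancestor G root (lca x y) w} = _
            rw [← hqxy, case_noA hG root lca hlca hA hqL hqB hmin hv]
          dsimp only
          rw [dif_pos (hraw ▸ hconnC), hraw]
    · push_neg at hB
      by_cases hA : ∃ u ∈ L, Ancestor G root u v
      · -- Case 3: p exists, B empty
        obtain ⟨w₀, hw₀1, hw₀2⟩ := hA
        have hfinA : {u | u ∈ L ∧ Ancestor G root u v}.Finite := Set.toFinite _
        obtain ⟨p, hpmem, hpmax'⟩ := Finset.exists_max_image hfinA.toFinset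
          (depth hG root) ⟨w₀, hfinA.mem_toFinset.mpr ⟨hw₀1, hw₀2⟩⟩
        rw [Set.Finite.mem_toFinset] at hpmem
        have hpL : p ∈ L := hpmem.1
        have hpv : Ancestor G root p v := hpmem.2
        have hmax : ∀ u' ∈ L, Ancestor G root u' v →
            depth hG root u' ≤ depth hG root p :=
          fun u' h1 h2 => hpmax' u' (hfinA.mem_toFinset.mpr ⟨h1, h2⟩)
        obtain ⟨c₁, hc1, hc2, hc3⟩ := child_exists hG root hpv
          (by rintro rfl; exact hv hpL)
        have heqC : reachSet G L v = {w | Ancestor G root c₁ w} :=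
          case_A_noB hG root lca hlca hpL hpv hmax hB hc1 hc2 hc3
        have hpZ : p ∈ Z :=
          case3_pZ hG root lca hlca hpL hpv hmax hB hc1 hc2 hc3 hbinary
        have hc₁kids : c₁ ∈ kidsF G root p := (mem_kidsF hG root).mpr ⟨hc1, hc2⟩
        have hkne : (kidsF G root p).Nonempty := ⟨c₁, hc₁kids⟩
        rcases child_min_or_max hG root (hbinary p) hc₁kids with hcm | hcm
        · refine ⟨(some p, none, none), ⟨?_, nofun, nofun⟩, ?_⟩
          · intro n h; cases h; exact hpZ
          · have hraw : rawφ G root lca (some p, none, none) = reachSet G L v := by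
              show (if h : (kidsF G root p).Nonempty
                then {w | Ancestor G root (@Finset.min' V vord _ h) w} else ∅) = _
              rw [dif_pos hkne, ← hcm, heqC]
            dsimp only
            rw [dif_pos (hraw ▸ hconnC), hraw]
        · refine ⟨(none, some p, none), ⟨nofun, ?_, nofun⟩, ?_⟩
          · intro n h; cases h; exact hpZ
          · have hraw : rawφ G root lca (none, some p, none) = reachSet G L v := by
              show (if h : (kidsF G root p).Nonempty
                then {w | Ancestor G root (@Finset.max' V vord _ h) w} else ∅) = _
              rw [dif_pos hkne, ← hcm, heqC]
            dsimp only
            rw [dif_pos (hraw ▸ hconnC), hraw]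
      · -- Case 1: no L-ancestor, B empty: the component is everything
        push_neg at hA
        refine ⟨(none, none, none), ⟨nofun, nofun, nofun⟩, ?_⟩
        have hraw : rawφ G root lca (none, none, none) = reachSet G L v := by
          show Set.univ = _
          rw [case_univ hG root lca hlca L hA hB]
        dsimp only
        rw [dif_pos (hraw ▸ hconnC), hraw]
  · rintro z ⟨x, hx, y, hy, hzxy⟩
    refine ⟨(some x, none, some y), ⟨?_, nofun, ?_⟩, ?_⟩
    · intro n h; cases h; exact hx
    · intro n h; cases h; exact hy
    · have hraw : rawφ G root lca (some x, none, some y) = {z} := by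
        show {lca x y} = _
        rw [hzxy]
      have hconn : ConnIn G (rawφ G root lca (some x, none, some y)) := by
        rw [hraw]
        intro u hu w' hw'
        rw [Set.mem_singleton_iff] at hu hw'
        subst hu
        subst hw'
        exact ⟨SimpleGraph.Walk.nil, by simp⟩
      dsimp only
      rw [dif_pos hconn, hraw]
end
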